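/- arXiv:2511.01280 — 9 statements merged into one kernel-verified Lean document; each statement's English description precedes it below -/
import Mathlib

section
/- For every integer q ≥ 2, every integer n ≥ 1, and every fixed boundary symbol x_0 ∈ Σ_q, there exist a boundary symbol x_{n+1} ∈ Σ_q and a code C ⊆ Σ_q^n with |C| ≥ q^{n+1} / ((q−1)(n+2)) such that C is a single-deletion labeling code for the pair-read labeling with boundary symbols x_0, x_{n+1}; that is, for all distinct x, x' ∈ C, no sequence can be obtained from both L(x) and L(x') by deleting at most one coordinate. -/
/-- Lists obtained from `u` by deleting at most one coordinate. -/
def delBall1 {σ : Type*} (u : List σ) : Set (List σ) :=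
  insert u {v | ∃ i < u.length, v = u.eraseIdx i}
/-- The extended word `x₀ x x_{n+1}`. -/
def extWord {q n : ℕ} (x0 xe : Fin q) (x : Fin n → Fin q) : Fin (n + 2) → Fin q :=
  Fin.cons x0 (Fin.snoc x xe)

/-- The pair-read labeling of `x` with boundary symbols `x0`, `xe`:
`L(x) = ((x₀,x₁),(x₁,x₂),…,(x_n,x_{n+1}))`. -/
def pairLabel {q n : ℕ} (x0 xe : Fin q) (x : Fin n → Fin q) : List (Fin q × Fin q) :=
  List.ofFn fun i : Fin (n + 1) =>
    (extWord x0 xe x i.castSucc, extWord x0 xe x i.succ)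

/-!
Take `x_{n+1} = x₀` and look at the run breaks of `y = x₀ x x₀`, the positions `k ≤ n` with
`y k ≠ y (k + 1)`; let `b` be their number and `S` their sum. If deleting the `i`-th label of
`L(x)` and the `j`-th label of `L(x')`, `i < j`, leaves the same list, then `y'` arises from `y`
by removing a symbol that repeats its left neighbour and doubling a symbol further right. This
keeps `b` and lowers `S` by the number `m` of breaks in between, `0 ≤ m ≤ b`, and `m = 0` forces
`y' = y`. So words with equal `b` and equal `S mod (b + 1)` have disjoint deletion balls, and
taking for each `b` the most frequent residue gives a code with at least `∑ₓ 1 / (b(x) + 1)`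
words.

The difference vector of `y` is a bijection onto the zero-sum vectors of `(ℤ/q)^{n+1}` that
turns `b` into the Hamming weight. The weight enumerator of the zero-sum vectors is
`((1 + (q-1)s)^{n+1} + (q-1)(1-s)^{n+1}) / q`, and integrating it over `[0, 1]`, as
`1 / (b + 1) = ∫₀¹ sᵇ ds`, gives
`∑ₓ 1 / (b(x) + 1) = ((q^{n+2} - 1) / (q - 1) + q - 1) / (q (n + 2))`.
-/

open Finset

theorem sum_mul_sub_eq_of_window {R : Type*} [CommRing R] {f f' g : ℕ → R} {N i d : ℕ}
    (hN : i + d < N) (hout : ∀ k < N, k < i ∨ i + d < k → f' k = f k)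
    (hin : ∀ t < d, f' (i + t) = f (i + t + 1)) (hi : f i = 0) (hd : f' (i + d) = 0) :
    ∑ k ∈ range N, g k * (f k - f' k) =
      ∑ t ∈ range d, (g (i + t + 1) - g (i + t)) * f (i + t + 1) := by
  have hsub : Ico i (i + d + 1) ⊆ range N := fun k hk => by
    simp only [mem_Ico, mem_range] at hk ⊢; omega
  rw [← sum_subset hsub fun k hk hk' => by
      simp only [mem_Ico, mem_range, not_and_or, not_le, not_lt] at hk hk'
      rw [hout k hk (by omega), sub_self, mul_zero],
    sum_Ico_eq_sum_range, show i + d + 1 - i = d + 1 by omega]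
  have hwin : ∑ t ∈ range d, g (i + t) * f' (i + t) =
      ∑ t ∈ range d, g (i + t) * f (i + t + 1) :=
    sum_congr rfl fun t ht => by rw [hin t (mem_range.mp ht)]
  simp only [mul_sub, sum_sub_distrib, sub_mul]
  rw [sum_range_succ' (fun t => g (i + t) * f (i + t)),
    sum_range_succ (fun t => g (i + t) * f' (i + t)), hwin]
  simp only [add_zero, hi, hd, mul_zero, ← add_assoc]

section PairSeq
variable {α : Type*} {y y' : ℕ → α} {N i j : ℕ}

/-- `y'` arises from `y` by deleting the symbol at position `i + 1`, which repeats its left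
neighbour, and repeating the symbol at position `i + d + 1`. -/
structure IsRunShift (y y' : ℕ → α) (N i d : ℕ) : Prop where
  lt : i + d < N
  pre : ∀ k ≤ i, y' k = y k
  window : ∀ k, i ≤ k → k ≤ i + d → y' k = y (k + 1)
  post : ∀ k, i + d < k → k ≤ N → y' k = y k

def pairSeq (N : ℕ) (y : ℕ → α) : List (α × α) :=
  List.ofFn fun k : Fin N => (y k, y (k + 1))

@[simp]
theorem length_pairSeq : (pairSeq N y).length = N := List.length_ofFn

theorem getElem_eraseIdx_pairSeq {k : ℕ} (hi : i < N) (hk : k + 1 < N) :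
    ((pairSeq N y).eraseIdx i)[k]'(by simp [List.length_eraseIdx, hi]; omega) =
      if k < i then (y k, y (k + 1)) else (y (k + 1), y (k + 2)) := by
  rw [List.getElem_eraseIdx]
  split_ifs <;> simp [pairSeq]

theorem pair_eq_of_eraseIdx_pairSeq_eq (hi : i < N) (hj : j < N)
    (h : (pairSeq N y).eraseIdx i = (pairSeq N y').eraseIdx j) {k : ℕ} (hk : k + 1 < N) :
    (if k < i then (y k, y (k + 1)) else (y (k + 1), y (k + 2))) =
      if k < j then (y' k, y' (k + 1)) else (y' (k + 1), y' (k + 2)) := by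
  rw [← getElem_eraseIdx_pairSeq hi hk, ← getElem_eraseIdx_pairSeq hj hk]
  exact List.getElem_of_eq h _

theorem eqOn_of_eraseIdx_pairSeq_eq_self (hi : i < N) (h0 : y 0 = y' 0) (hN : y N = y' N)
    (h : (pairSeq N y).eraseIdx i = (pairSeq N y').eraseIdx i) : ∀ k ≤ N, y' k = y k := by
  intro k hk
  have hpair := fun k hk => pair_eq_of_eraseIdx_pairSeq_eq hi hi h (k := k) hk
  rcases k with _ | k
  · exact h0.symm
  rcases le_or_gt (k + 1) i with hki | hki
  · have := hpair k (by omega)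
    simp only [if_pos (show k < i by omega), Prod.mk.injEq] at this
    exact this.2.symm
  rcases eq_or_lt_of_le hk with rfl | hkN
  · exact hN.symm
  · have := hpair k (by omega)
    simp only [if_neg (show ¬k < i by omega), Prod.mk.injEq] at this
    exact this.1.symm

theorem isRunShift_of_eraseIdx_pairSeq_eq (hij : i < j) (hj : j < N) (h0 : y 0 = y' 0)
    (hN : y N = y' N) (h : (pairSeq N y).eraseIdx i = (pairSeq N y').eraseIdx j) :
    IsRunShift y y' N i (j - i) := by
  have hpair := fun k hk => pair_eq_of_eraseIdx_pairSeq_eq (hij.trans hj) hj h (k := k) hk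
  have hpre : ∀ k ≤ i, y' k = y k := by
    rintro (_ | k) hk
    · exact h0.symm
    · have := hpair k (by omega)
      simp only [if_pos (show k < i by omega), if_pos (show k < j by omega), Prod.mk.injEq] at this
      exact this.2.symm
  refine ⟨by omega, hpre, fun k hik hkj => ?_, fun k hjk hkN => ?_⟩
  · rcases lt_or_eq_of_le (show k ≤ j by omega) with hkj | rfl
    · have := hpair k (by omega)
      simp only [if_neg (show ¬k < i by omega), if_pos hkj, Prod.mk.injEq] at this
      exact this.1.symm
    · obtain ⟨k, rfl⟩ : ∃ k', k = k' + 1 := ⟨k - 1, by omega⟩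
      have := hpair k (by omega)
      simp only [if_neg (show ¬k < i by omega), if_pos (show k < k + 1 by omega),
        Prod.mk.injEq] at this
      exact this.2.symm
  · rcases eq_or_lt_of_le hkN with rfl | hkN
    · exact hN.symm
    · obtain ⟨k, rfl⟩ : ∃ k', k = k' + 1 := ⟨k - 1, by omega⟩
      have := hpair k (by omega)
      simp only [if_neg (show ¬k < i by omega), if_neg (show ¬k < j by omega),
        Prod.mk.injEq] at this
      exact this.1.symm

end PairSeq

section RunBreaks
variable {α : Type*} [DecidableEq α]

def runBreak (y : ℕ → α) (k : ℕ) : ℕ := if y k = y (k + 1) then 0 else 1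

def numBreaks (N : ℕ) (y : ℕ → α) : ℕ := ∑ k ∈ range N, runBreak y k

def breakMoment (N : ℕ) (y : ℕ → α) : ℕ := ∑ k ∈ range N, k * runBreak y k

theorem runBreak_eq_zero {y : ℕ → α} {k : ℕ} : runBreak y k = 0 ↔ y k = y (k + 1) := by
  unfold runBreak; split_ifs <;> simp_all

variable {y y' : ℕ → α} {N i d : ℕ}

theorem IsRunShift.numBreaks_eq_and_breakMoment_eq (h : IsRunShift y y' N i d) :
    numBreaks N y' = numBreaks N y ∧
      breakMoment N y' + ∑ t ∈ range d, runBreak y (i + t + 1) = breakMoment N y := by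
  obtain ⟨hN, hpre, hwin, hpost⟩ := h
  have key (g : ℕ → ℤ) := sum_mul_sub_eq_of_window (g := g)
    (f := fun k => (runBreak y k : ℤ)) (f' := fun k => (runBreak y' k : ℤ)) hN
    (fun k hk hout => by
      rcases hout with hk' | hk'
      · simp only [runBreak, hpre k hk'.le, hpre (k + 1) hk']
      · simp only [runBreak, hpost k hk' hk.le, hpost (k + 1) (by omega) hk])
    (fun t ht => by
      simp only [runBreak, hwin (i + t) (by omega) (by omega),
        hwin (i + t + 1) (by omega) (by omega)])
    (by simp only [runBreak, ← hpre i le_rfl, hwin i le_rfl (by omega), if_pos, Nat.cast_zero])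
    (by simp only [runBreak, hwin (i + d) (by omega) le_rfl,
      hpost (i + d + 1) (by omega) (by omega), if_pos, Nat.cast_zero])
  have h1 := key 1
  have h2 := key (fun k => k)
  simp only [Pi.one_apply, one_mul, sub_self, zero_mul, sum_const_zero, sum_sub_distrib] at h1
  push_cast at h2
  simp only [add_sub_cancel_left, one_mul, mul_sub, sum_sub_distrib] at h2
  constructor
  · unfold numBreaks; exact_mod_cast (sub_eq_zero.mp h1).symm
  · unfold breakMoment; zify; linarith

theorem IsRunShift.eqOn_of_sum_eq_zero (h : IsRunShift y y' N i d)
    (hzero : ∑ t ∈ range d, runBreak y (i + t + 1) = 0) : ∀ k ≤ N, y' k = y k := by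
  intro k hk
  rcases le_or_gt k i with hki | hki
  · exact h.pre k hki
  rcases le_or_gt k (i + d) with hkd | hkd
  · obtain ⟨t, rfl⟩ : ∃ t, k = i + t + 1 := ⟨k - i - 1, by omega⟩
    rw [h.window _ hki.le hkd]
    exact (runBreak_eq_zero.mp (sum_eq_zero_iff.mp hzero t (mem_range.mpr (by omega)))).symm
  · exact h.post k hkd hk

theorem IsRunShift.eqOn_of_mod_eq (h : IsRunShift y y' N i d) {c : ℕ → ℕ}
    (hc : breakMoment N y % (numBreaks N y + 1) = c (numBreaks N y))
    (hc' : breakMoment N y' % (numBreaks N y' + 1) = c (numBreaks N y')) :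
    ∀ k ≤ N, y' k = y k := by
  obtain ⟨hb, hm⟩ := h.numBreaks_eq_and_breakMoment_eq
  set m := ∑ t ∈ range d, runBreak y (i + t + 1)
  rcases Nat.eq_zero_or_pos m with hm0 | hm0
  · exact h.eqOn_of_sum_eq_zero hm0
  have hmb : m ≤ numBreaks N y :=
    calc m = ∑ k ∈ Ico (i + 1) (i + 1 + d), runBreak y k := by
          rw [sum_Ico_eq_sum_range, Nat.add_sub_cancel_left]; simp only [m, add_right_comm]
      _ ≤ numBreaks N y :=
          sum_le_sum_of_subset fun k hk => by
            simp only [mem_Ico, mem_range] at hk ⊢; have := h.lt; omega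
  rw [hb] at hc'
  have : (numBreaks N y + 1) ∣ m := by
    rw [← hm, ← hc'] at hc
    exact (Nat.modEq_zero_iff_dvd).mp (Nat.ModEq.add_left_cancel' _ hc)
  exact absurd (Nat.le_of_dvd hm0 this) (by omega)

theorem eqOn_of_eraseIdx_pairSeq_eq {j : ℕ} {c : ℕ → ℕ} (hi : i < N) (hj : j < N)
    (h0 : y 0 = y' 0) (hN : y N = y' N)
    (hc : breakMoment N y % (numBreaks N y + 1) = c (numBreaks N y))
    (hc' : breakMoment N y' % (numBreaks N y' + 1) = c (numBreaks N y'))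
    (h : (pairSeq N y).eraseIdx i = (pairSeq N y').eraseIdx j) : ∀ k ≤ N, y' k = y k := by
  wlog hij : i ≤ j generalizing i j y y'
  · intro k hk
    exact (this hj hi h0.symm hN.symm hc' hc h.symm (by omega) k hk).symm
  rcases eq_or_lt_of_le hij with rfl | hij
  · exact eqOn_of_eraseIdx_pairSeq_eq_self hi h0 hN h
  · exact (isRunShift_of_eraseIdx_pairSeq_eq hij hj h0 hN h).eqOn_of_mod_eq hc hc'

end RunBreaks

theorem exists_eraseIdx_eq_of_mem_delBall1 {σ : Type*} {u u' v : List σ}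
    (hlen : u.length = u'.length) (hpos : 0 < u.length) (hv : v ∈ delBall1 u)
    (hv' : v ∈ delBall1 u') :
    ∃ i < u.length, ∃ j < u.length, u.eraseIdx i = u'.eraseIdx j := by
  simp only [delBall1, Set.mem_insert_iff, Set.mem_ofPred_eq] at hv hv'
  rcases hv with rfl | ⟨i, hi, rfl⟩ <;> rcases hv' with hv' | ⟨j, hj, hv'⟩
  · exact ⟨0, hpos, 0, hpos, by rw [hv']⟩
  · have := congrArg List.length hv'; rw [List.length_eraseIdx_of_lt hj] at this; omega
  · have := congrArg List.length hv'; rw [List.length_eraseIdx_of_lt hi] at this; omega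
  · exact ⟨i, hi, j, hlen ▸ hj, hv'⟩

theorem pow_hammingNorm {ι β : Type*} [Fintype ι] [Zero β] [DecidableEq β] (s : ℝ)
    (e : ι → β) :
    s ^ hammingNorm e = ∏ i, if e i = 0 then 1 else s := by
  rw [prod_ite, prod_const_one, one_mul, prod_const, hammingNorm]

section ZeroSum
variable (G : Type*) [AddCommGroup G] [Fintype G] [DecidableEq G]

theorem sum_pow_hammingNorm (M : ℕ) (s : ℝ) :
    ∑ e : Fin M → G, s ^ hammingNorm e = (1 + (Fintype.card G - 1) * s) ^ M := by
  simp only [pow_hammingNorm]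
  rw [← Fintype.prod_sum (fun (_ : Fin M) (g : G) => if g = 0 then 1 else s), prod_const,
    card_univ, Fintype.card_fin, sum_ite, filter_eq', filter_ne']
  simp [card_univ, Nat.cast_sub Fintype.card_pos]

noncomputable def zeroSumEnumerator (M : ℕ) (s : ℝ) : ℝ :=
  ∑ e : Fin M → G with ∑ i, e i = 0, s ^ hammingNorm e

theorem zeroSumEnumerator_succ (M : ℕ) (s : ℝ) :
    zeroSumEnumerator G (M + 1) s =
      (1 - s) * zeroSumEnumerator G M s + s * (1 + (Fintype.card G - 1) * s) ^ M := by
  rw [← sum_pow_hammingNorm, zeroSumEnumerator, zeroSumEnumerator, sum_filter, sum_filter,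
    ← (Fin.consEquiv fun _ => G).sum_comp, Fintype.sum_prod_type, sum_comm]
  simp only [Fin.consEquiv_apply, Fin.sum_univ_succ, Fin.cons_zero, Fin.cons_succ,
    pow_hammingNorm, Fin.prod_univ_succ, add_eq_zero_iff_eq_neg, ite_mul, sum_ite_eq', mem_univ,
    if_true, neg_eq_zero, mul_sum, ← sum_add_distrib]
  refine sum_congr rfl fun e _ => ?_
  split_ifs <;> ring

theorem card_mul_zeroSumEnumerator (M : ℕ) (s : ℝ) :
    Fintype.card G * zeroSumEnumerator G M s =
      (1 + (Fintype.card G - 1) * s) ^ M + (Fintype.card G - 1) * (1 - s) ^ M := by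
  induction M with
  | zero => simp [zeroSumEnumerator, hammingNorm]
  | succ M ih =>
    rw [zeroSumEnumerator_succ, mul_add, mul_left_comm, ih]
    ring

theorem card_filter_sum_eq_zero (M : ℕ) :
    #{e : Fin (M + 1) → G | ∑ i, e i = 0} = Fintype.card G ^ M := by
  have h := card_mul_zeroSumEnumerator G (M + 1) 1
  simp only [zeroSumEnumerator, one_pow, sum_const, nsmul_eq_mul, mul_one, sub_self,
    zero_pow (Nat.succ_ne_zero M), mul_zero, add_zero] at h
  rw [add_sub_cancel, pow_succ'] at h
  exact_mod_cast mul_left_cancel₀ (Nat.cast_ne_zero.mpr Fintype.card_ne_zero) h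

end ZeroSum

theorem integral_one_add_mul_pow {c : ℝ} (hc : c ≠ 0) (M : ℕ) :
    ∫ s in (0 : ℝ)..1, (1 + c * s) ^ M = ((1 + c) ^ (M + 1) - 1) / (c * (M + 1)) := by
  have := intervalIntegral.integral_comp_mul_add (a := 0) (b := 1) (fun s => s ^ M) hc 1
  simp only [mul_zero, zero_add, mul_one] at this
  rw [show (fun s : ℝ => (1 + c * s) ^ M) = fun s => (c * s + 1) ^ M by simp [add_comm], this,
    integral_pow, smul_eq_mul, one_pow, add_comm c]
  field_simp

theorem exists_sum_one_div_le_card_filter_mod_eq {ι : Type*} [Fintype ι] (b S : ι → ℕ) :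
    ∃ c : ℕ → ℕ, ∑ x, (1 : ℝ) / (b x + 1) ≤ #{x | S x % (b x + 1) = c (b x)} := by
  classical
  have hfiber (β : ℕ) :
      ∃ r, (#{x | b x = β} : ℝ) / (β + 1) ≤ #{x | b x = β ∧ S x % (β + 1) = r} := by
    obtain ⟨r, -, hr⟩ := exists_le_card_fiber_of_nsmul_le_card_of_maps_to
      (s := {x | b x = β}) (t := range (β + 1)) (f := fun x => S x % (β + 1))
      (fun x _ => mem_range.mpr (Nat.mod_lt _ β.succ_pos)) ⟨0, mem_range.mpr β.succ_pos⟩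
      (b := (#{x | b x = β} : ℝ) / (β + 1))
      (by rw [card_range, nsmul_eq_mul]; push_cast; field_simp; rfl)
    exact ⟨r, by rwa [filter_filter] at hr⟩
  choose c hc using hfiber
  refine ⟨c, ?_⟩
  have hmaps : ∀ x ∈ (univ : Finset ι), b x ∈ univ.image b :=
    fun x _ => mem_image_of_mem b (mem_univ x)
  calc ∑ x, (1 : ℝ) / (b x + 1)
      = ∑ β ∈ univ.image b, ∑ x with b x = β, (1 : ℝ) / (b x + 1) :=
        (sum_fiberwise_of_maps_to hmaps _).symm
    _ = ∑ β ∈ univ.image b, (#{x | b x = β} : ℝ) / (β + 1) := by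
        refine sum_congr rfl fun β _ => ?_
        rw [sum_congr rfl fun x hx => by rw [(mem_filter.mp hx).2], sum_const, nsmul_eq_mul,
          mul_one_div]
    _ ≤ ∑ β ∈ univ.image b, (#{x | b x = β ∧ S x % (β + 1) = c β} : ℝ) :=
        sum_le_sum fun β _ => hc β
    _ = #{x | S x % (b x + 1) = c (b x)} := by
        rw [card_eq_sum_card_fiberwise (f := b) (t := univ.image b)
          fun x _ => hmaps x (mem_univ x)]
        push_cast
        refine sum_congr rfl fun β _ => ?_
        rw [filter_filter]
        exact congrArg (fun s => (#s : ℝ)) (filter_congr fun x _ =>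
          ⟨fun h => ⟨h.1 ▸ h.2, h.1⟩, fun h => ⟨h.2, h.2 ▸ h.1⟩⟩)

section ExtSeq
variable {q n : ℕ}

def extSeq (x0 xe : Fin q) (x : Fin n → Fin q) (k : ℕ) : Fin q :=
  if h : k < n + 2 then extWord x0 xe x ⟨k, h⟩ else xe

variable (x0 xe : Fin q)

@[simp]
theorem extSeq_zero (x : Fin n → Fin q) : extSeq x0 xe x 0 = x0 := by
  simp [extSeq, extWord]

theorem extSeq_succ (x : Fin n → Fin q) {k : ℕ} (hk : k < n) :
    extSeq x0 xe x (k + 1) = x ⟨k, hk⟩ := by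
  rw [extSeq, dif_pos (by omega)]
  exact Fin.snoc_castSucc (α := fun _ => Fin q) (i := ⟨k, hk⟩) ..

@[simp]
theorem extSeq_last (x : Fin n → Fin q) : extSeq x0 xe x (n + 1) = xe := by
  rw [extSeq, dif_pos (by omega)]
  exact Fin.snoc_last (α := fun _ => Fin q) ..

theorem pairLabel_eq_pairSeq (x : Fin n → Fin q) :
    pairLabel x0 xe x = pairSeq (n + 1) (extSeq x0 xe x) := by
  simp only [pairLabel, pairSeq, extSeq]
  congr 1
  funext k
  rw [dif_pos (by omega), dif_pos (by omega)]
  rfl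

theorem eq_of_forall_extSeq_eq {x x' : Fin n → Fin q}
    (h : ∀ k ≤ n + 1, extSeq x0 xe x' k = extSeq x0 xe x k) : x' = x := by
  funext j
  have := h (j + 1) (by omega)
  rwa [extSeq_succ _ _ _ j.isLt, extSeq_succ _ _ _ j.isLt] at this

def breakResidueCode (c : ℕ → ℕ) : Finset (Fin n → Fin q) :=
  {x | breakMoment (n + 1) (extSeq x0 x0 x) % (numBreaks (n + 1) (extSeq x0 x0 x) + 1) =
    c (numBreaks (n + 1) (extSeq x0 x0 x))}

theorem eq_of_mem_breakResidueCode {c : ℕ → ℕ} {x x' : Fin n → Fin q}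
    {v : List (Fin q × Fin q)} (hx : x ∈ breakResidueCode x0 c)
    (hx' : x' ∈ breakResidueCode x0 c) (hv : v ∈ delBall1 (pairLabel x0 x0 x))
    (hv' : v ∈ delBall1 (pairLabel x0 x0 x')) : x' = x := by
  simp only [breakResidueCode, mem_filter, mem_univ, true_and] at hx hx'
  rw [pairLabel_eq_pairSeq] at hv hv'
  obtain ⟨i, hi, j, hj, h⟩ := exists_eraseIdx_eq_of_mem_delBall1 (by simp) (by simp) hv hv'
  rw [length_pairSeq] at hi hj
  exact eq_of_forall_extSeq_eq x0 x0
    (eqOn_of_eraseIdx_pairSeq_eq hi hj (by simp) (by simp) hx hx' h)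

end ExtSeq

section Differences
variable {q n : ℕ} [NeZero q] (x0 : Fin q)

def diffVec (x : Fin n → Fin q) (k : Fin (n + 1)) : Fin q :=
  extSeq x0 x0 x ((k : ℕ) + 1) - extSeq x0 x0 x k

theorem sum_diffVec (x : Fin n → Fin q) : ∑ k, diffVec x0 x k = 0 := by
  simp only [diffVec]
  refine (Fin.sum_univ_eq_sum_range
    (fun k => extSeq x0 x0 x (k + 1) - extSeq x0 x0 x k) _).trans ?_
  rw [sum_range_sub, extSeq_last, extSeq_zero, sub_self]

theorem hammingNorm_diffVec (x : Fin n → Fin q) :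
    hammingNorm (diffVec x0 x) = numBreaks (n + 1) (extSeq x0 x0 x) := by
  rw [hammingNorm, card_filter, numBreaks,
    ← Fin.sum_univ_eq_sum_range (runBreak (extSeq x0 x0 x))]
  refine sum_congr rfl fun k _ => ?_
  simp only [diffVec, runBreak, ne_eq, sub_eq_zero, eq_comm]
  split_ifs <;> rfl

theorem diffVec_injective : Function.Injective (diffVec (n := n) x0) := by
  intro x x' h
  refine eq_of_forall_extSeq_eq x0 x0 fun k hk => ?_
  induction k with
  | zero => simp
  | succ k ih =>
    have := congrFun h ⟨k, by omega⟩
    simp only [diffVec] at this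
    rw [ih (by omega)] at this
    exact sub_left_inj.mp this

theorem sum_pow_numBreaks (s : ℝ) :
    ∑ x : Fin n → Fin q, s ^ numBreaks (n + 1) (extSeq x0 x0 x) =
      zeroSumEnumerator (Fin q) (n + 1) s := by
  set t : Finset (Fin (n + 1) → Fin q) := {e | ∑ i, e i = 0}
  have hmaps : Set.MapsTo (diffVec (n := n) x0) (univ : Finset (Fin n → Fin q)) t :=
    fun x _ => by simp [t, sum_diffVec]
  have hinj := (diffVec_injective (n := n) x0).injOn (s := ↑(univ : Finset (Fin n → Fin q)))
  refine sum_nbij (diffVec x0) hmaps hinj (surjOn_of_injOn_of_card_le _ hmaps hinj ?_)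
    fun x _ => by rw [hammingNorm_diffVec]
  simp [card_filter_sum_eq_zero]

theorem card_mul_sum_one_div_numBreaks_add_one (hq : 2 ≤ q) :
    q * ∑ x : Fin n → Fin q, (1 : ℝ) / (numBreaks (n + 1) (extSeq x0 x0 x) + 1) =
      (q ^ (n + 2) - 1) / ((q - 1) * (n + 2)) + (q - 1) / (n + 2) := by
  have hpow (b : ℕ) : (1 : ℝ) / (b + 1) = ∫ s in (0 : ℝ)..1, s ^ b := by simp [integral_pow]
  have hint (M : ℕ) (c : ℝ) :
      IntervalIntegrable (fun s : ℝ => (1 + c * s) ^ M) MeasureTheory.volume 0 1 :=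
    (by fun_prop : Continuous fun s : ℝ => (1 + c * s) ^ M).intervalIntegrable _ _
  simp only [hpow]
  rw [← intervalIntegral.integral_finsetSum fun x _ => (continuous_pow _).intervalIntegrable _ _,
    ← intervalIntegral.integral_const_mul]
  have hq1 : (q : ℝ) - 1 ≠ 0 := by
    have : (2 : ℝ) ≤ q := by exact_mod_cast hq
    linarith
  have hZ (s : ℝ) : q * zeroSumEnumerator (Fin q) (n + 1) s =
      (1 + (q - 1) * s) ^ (n + 1) + (q - 1) * (1 + (-1) * s) ^ (n + 1) := by
    simpa [neg_one_mul, ← sub_eq_add_neg] using card_mul_zeroSumEnumerator (Fin q) (n + 1) s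
  simp only [sum_pow_numBreaks, hZ]
  rw [intervalIntegral.integral_add (hint _ _) ((hint _ _).const_mul _),
    intervalIntegral.integral_const_mul, integral_one_add_mul_pow hq1,
    integral_one_add_mul_pow (by norm_num)]
  push_cast
  field_simp
  ring

theorem le_sum_one_div_numBreaks_add_one (hq : 2 ≤ q) :
    (q : ℝ) ^ (n + 1) / ((q - 1) * (n + 2)) ≤
      ∑ x : Fin n → Fin q, (1 : ℝ) / (numBreaks (n + 1) (extSeq x0 x0 x) + 1) := by
  have hq' : (2 : ℝ) ≤ q := by exact_mod_cast hq
  have hpos : (0 : ℝ) < (q - 1) * (n + 2) := by nlinarith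
  refine le_of_mul_le_mul_left ?_ (by linarith : (0 : ℝ) < q)
  rw [card_mul_sum_one_div_numBreaks_add_one x0 hq, ← mul_div_assoc, ← pow_succ']
  have hslack : ((q : ℝ) ^ (n + 2) - 1) / ((q - 1) * (n + 2)) + (q - 1) / (n + 2) -
      q ^ (n + 1 + 1) / ((q - 1) * (n + 2)) = q * (q - 2) / ((q - 1) * (n + 2)) := by
    field_simp
    ring
  have : (0 : ℝ) ≤ q * (q - 2) / ((q - 1) * (n + 2)) := div_nonneg (by nlinarith) hpos.le
  linarith

end Differences

theorem stmt0_general (q n : ℕ) (hq : 2 ≤ q) (x0 : Fin q) :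
    ∃ (xe : Fin q) (C : Set (Fin n → Fin q)),
      (q : ℝ) ^ (n + 1) / (((q : ℝ) - 1) * ((n : ℝ) + 2)) ≤ (C.ncard : ℝ) ∧
      ∀ x ∈ C, ∀ x' ∈ C, x ≠ x' →
        ∀ v : List (Fin q × Fin q),
          v ∈ delBall1 (pairLabel x0 xe x) → v ∈ delBall1 (pairLabel x0 xe x') → False := by
  have : NeZero q := ⟨by omega⟩
  obtain ⟨c, hc⟩ := exists_sum_one_div_le_card_filter_mod_eq
    (fun x : Fin n → Fin q => numBreaks (n + 1) (extSeq x0 x0 x))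
    (fun x => breakMoment (n + 1) (extSeq x0 x0 x))
  refine ⟨x0, ↑(breakResidueCode x0 c : Finset (Fin n → Fin q)), ?_,
    fun x hx x' hx' hne v hv hv' => ?_⟩
  · rw [Set.ncard_coe_finset]
    exact (le_sum_one_div_numBreaks_add_one x0 hq).trans hc
  · exact hne (eq_of_mem_breakResidueCode x0 hx' hx hv' hv)

/-- For every `q ≥ 2`, `n ≥ 1` and boundary symbol `x₀`, there
exist a boundary symbol `x_{n+1}` and a code `C ⊆ Σ_q^n` with
`|C| ≥ q^{n+1} / ((q−1)(n+2))` that is a single-deletion labeling code for the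
pair-read labeling with boundary symbols `x₀, x_{n+1}`. -/
theorem stmt0 (q n : ℕ) (hq : 2 ≤ q) (hn : 1 ≤ n) (x0 : Fin q) :
    ∃ (xe : Fin q) (C : Set (Fin n → Fin q)),
      (q : ℝ) ^ (n + 1) / (((q : ℝ) - 1) * ((n : ℝ) + 2)) ≤ (C.ncard : ℝ) ∧
      ∀ x ∈ C, ∀ x' ∈ C, x ≠ x' →
        ∀ v : List (Fin q × Fin q),
          v ∈ delBall1 (pairLabel x0 xe x) → v ∈ delBall1 (pairLabel x0 xe x') → False :=
  stmt0_general q n hq x0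
end

section
/- Let m ≥ 3 and let C ⊆ {0,1}^m be a zero-deletion code. Then |C| ≤ 2^{m+2}/(m−2). -/
/-- Lists obtained from `u` by deleting a single coordinate equal to `0`. -/
def zeroDelBall {q : ℕ} [NeZero q] (u : List (Fin q)) : Set (List (Fin q)) :=
  {v | ∃ i, ∃ h : i < u.length, u[i] = 0 ∧ v = u.eraseIdx i}

/-!
Deleting the first zero of two different runs of zeros of a binary word `c` gives two different
words (and likewise for the last zeros), so the zero-deletion ball `B(c)` has at least as many
elements as `c` has runs of zeros. The balls of the codewords are pairwise disjoint subsets of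
`{0,1}^(m-1)`, hence with `s = ⌊(m - 2) / 8⌋` at most `2 ^ (m - 1) / (s + 1)` codewords have more
than `s` runs. A word is determined by the positions in `{0, …, m}` where it changes letter (after
padding it by `1` on both sides), and there are at most `2 * |B(c)|` of them; so at most
`∑_{k ≤ 2s} C(m + 1, k) ≤ 4 ^ (m + 1) / 3 ^ (m + 1 - 2s)` codewords have at most `s` runs.
The choice of `s` makes the two bounds add up to at most `2 ^ (m + 2) / (m - 2)`.
-/

open Finset

theorem List.getD_eq_getD_succ_of_eraseIdx_eq {α : Type*} {l : List α} {i j k : ℕ} (d : α)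
    (hik : i ≤ k) (hkj : k < j) (hj : j < l.length) (h : l.eraseIdx i = l.eraseIdx j) :
    l.getD k d = l.getD (k + 1) d := by
  have hk : k < (l.eraseIdx j).length := by rw [length_eraseIdx_of_lt hj]; omega
  rw [getD_eq_getElem _ _ (by omega), getD_eq_getElem _ _ (by omega),
    ← getElem_eraseIdx_of_lt hk hkj, ← getElem_eraseIdx_of_ge (h ▸ hk) hik]
  exact getElem_of_eq h.symm hk

def wordsOfLength (α : Type*) [Fintype α] (n : ℕ) : Finset (List α) :=
  (univ : Finset (Fin n → α)).map ⟨List.ofFn, List.ofFn_injective⟩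

theorem mem_wordsOfLength {α : Type*} [Fintype α] {n : ℕ} {l : List α} :
    l ∈ wordsOfLength α n ↔ l.length = n := by
  refine ⟨?_, fun h => ?_⟩
  · simp only [wordsOfLength, mem_map]
    rintro ⟨f, -, rfl⟩
    exact List.length_ofFn
  · subst h
    exact mem_map.2 ⟨fun i => l[(i : ℕ)], mem_univ _, List.ofFn_getElem⟩

theorem card_wordsOfLength (α : Type*) [Fintype α] (n : ℕ) :
    #(wordsOfLength α n) = Fintype.card α ^ n := by
  simp [wordsOfLength]

section ZeroDeletion

variable {q : ℕ} [NeZero q]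

def zeroDelFinset (u : List (Fin q)) : Finset (List (Fin q)) :=
  ((range u.length).filter fun i => u[i]? = some 0).image u.eraseIdx

theorem coe_zeroDelFinset (u : List (Fin q)) : (zeroDelFinset u : Set _) = zeroDelBall u := by
  ext v
  simp only [zeroDelFinset, coe_image, coe_filter, mem_range, Set.mem_image, Set.mem_ofPred_eq,
    zeroDelBall, List.getElem?_eq_some_iff]
  constructor
  · rintro ⟨i, ⟨-, hi, h0⟩, rfl⟩
    exact ⟨i, hi, h0, rfl⟩
  · rintro ⟨i, hi, h0, rfl⟩
    exact ⟨i, ⟨hi, hi, h0⟩, rfl⟩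

theorem zeroDelFinset_subset_wordsOfLength (u : List (Fin q)) :
    zeroDelFinset u ⊆ wordsOfLength (Fin q) (u.length - 1) := by
  intro v hv
  obtain ⟨i, hi, rfl⟩ := mem_image.1 hv
  exact mem_wordsOfLength.2 (List.length_eraseIdx_of_lt (mem_range.1 (mem_filter.1 hi).1))

theorem card_le_card_zeroDelFinset {u : List (Fin q)} {I : Finset ℕ}
    (hI : ∀ i ∈ I, u[i]? = some 0) (hinj : Set.InjOn u.eraseIdx I) :
    #I ≤ #(zeroDelFinset u) := by
  refine card_le_card_of_injOn u.eraseIdx (fun i hi => mem_image_of_mem _ ?_) hinj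
  have h0 := hI i hi
  exact mem_filter.2 ⟨mem_range.2 (List.getElem?_eq_some_iff.1 h0).1, h0⟩

theorem mul_card_le_of_pairwiseDisjoint {S : Finset (List (Fin q))} {n t : ℕ}
    (hlen : ∀ c ∈ S, c.length = n) (hdisj : (S : Set (List (Fin q))).PairwiseDisjoint zeroDelFinset)
    (ht : ∀ c ∈ S, t ≤ #(zeroDelFinset c)) :
    t * #S ≤ q ^ (n - 1) := by
  calc t * #S = ∑ _c ∈ S, t := by rw [sum_const, smul_eq_mul, mul_comm]
    _ ≤ ∑ c ∈ S, #(zeroDelFinset c) := sum_le_sum ht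
    _ = #(S.biUnion zeroDelFinset) := (card_biUnion hdisj).symm
    _ ≤ #(wordsOfLength (Fin q) (n - 1)) := card_le_card <| biUnion_subset.2 fun c hc => by
        simpa only [hlen c hc] using zeroDelFinset_subset_wordsOfLength c
    _ = q ^ (n - 1) := by rw [card_wordsOfLength, Fintype.card_fin]

end ZeroDeletion

theorem List.getD_one_eq_zero_iff {w : List (Fin 2)} {i : ℕ} : w.getD i 1 = 0 ↔ w[i]? = some 0 := by
  rw [List.getD_eq_getElem?_getD]
  cases w[i]? <;> simp

theorem List.lt_length_of_getD_eq_zero {w : List (Fin 2)} {i : ℕ} (h : w.getD i 1 = 0) :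
    i < w.length :=
  (List.getElem?_eq_some_iff.1 (List.getD_one_eq_zero_iff.1 h)).1

-- `(1 :: w).getD i 1` is the letter before position `i` of `w`, padded by `1` on both sides.
def runStarts (w : List (Fin 2)) : Finset ℕ :=
  (range w.length).filter fun i => w.getD i 1 = 0 ∧ (1 :: w).getD i 1 = 1

def runEnds (w : List (Fin 2)) : Finset ℕ :=
  (range w.length).filter fun i => w.getD i 1 = 0 ∧ w.getD (i + 1) 1 = 1

def transitions (w : List (Fin 2)) : Finset ℕ :=
  (range (w.length + 1)).filter fun i => (1 :: w).getD i 1 ≠ w.getD i 1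

theorem eraseIdx_injOn_runStarts (w : List (Fin 2)) : Set.InjOn w.eraseIdx (runStarts w) := by
  intro i hi j hj h
  by_contra hne
  wlog hij : i < j generalizing i j
  · exact this hj hi h.symm (Ne.symm hne) (by omega)
  simp only [runStarts, coe_filter, mem_range, Set.mem_ofPred_eq] at hj
  obtain ⟨hjlen, hj0, hj1⟩ := hj
  obtain ⟨k, rfl⟩ : ∃ k, j = k + 1 := ⟨j - 1, by omega⟩
  rw [List.getD_cons_succ] at hj1
  have := w.getD_eq_getD_succ_of_eraseIdx_eq 1 (by omega) (Nat.lt_succ_self k) hjlen h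
  omega

theorem eraseIdx_injOn_runEnds (w : List (Fin 2)) : Set.InjOn w.eraseIdx (runEnds w) := by
  intro i hi j hj h
  by_contra hne
  wlog hij : i < j generalizing i j
  · exact this hj hi h.symm (Ne.symm hne) (by omega)
  simp only [runEnds, coe_filter, mem_range, Set.mem_ofPred_eq] at hi hj
  have := w.getD_eq_getD_succ_of_eraseIdx_eq 1 le_rfl hij hj.1 h
  omega

theorem transitions_subset (w : List (Fin 2)) :
    transitions w ⊆ runStarts w ∪ (runEnds w).image (· + 1) := by
  intro i hi
  simp only [transitions, mem_filter, mem_range] at hi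
  obtain ⟨hilen, hne⟩ := hi
  simp only [runStarts, runEnds, mem_union, mem_filter, mem_range, mem_image]
  by_cases h0 : w.getD i 1 = 0
  · exact Or.inl ⟨List.lt_length_of_getD_eq_zero h0, h0, by omega⟩
  · obtain ⟨k, rfl⟩ : ∃ k, i = k + 1 := by
      rcases i with _ | k
      · rw [List.getD_cons_zero] at hne
        omega
      · exact ⟨k, rfl⟩
    rw [List.getD_cons_succ] at hne
    have hk : w.getD k 1 = 0 := by omega
    exact Or.inr ⟨k, ⟨List.lt_length_of_getD_eq_zero hk, hk, by omega⟩, rfl⟩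

theorem card_transitions_le (w : List (Fin 2)) : #(transitions w) ≤ 2 * #(zeroDelFinset w) := by
  have hstarts : #(runStarts w) ≤ #(zeroDelFinset w) :=
    card_le_card_zeroDelFinset (fun i hi => List.getD_one_eq_zero_iff.1 (mem_filter.1 hi).2.1)
      (eraseIdx_injOn_runStarts w)
  have hends : #(runEnds w) ≤ #(zeroDelFinset w) :=
    card_le_card_zeroDelFinset (fun i hi => List.getD_one_eq_zero_iff.1 (mem_filter.1 hi).2.1)
      (eraseIdx_injOn_runEnds w)
  calc #(transitions w) ≤ #(runStarts w ∪ (runEnds w).image (· + 1)) :=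
        card_le_card (transitions_subset w)
    _ ≤ #(runStarts w) + #(runEnds w) :=
        (card_union_le _ _).trans (add_le_add_right card_image_le _)
    _ ≤ 2 * #(zeroDelFinset w) := by omega

theorem eq_of_transitions_eq {w w' : List (Fin 2)} (hlen : w.length = w'.length)
    (h : transitions w = transitions w') : w = w' := by
  have hstep : ∀ i, (1 :: w).getD i 1 = (1 :: w').getD i 1 → w.getD i 1 = w'.getD i 1 := by
    intro i hprev
    by_cases hi : i < w.length
    · have hmem : i ∈ transitions w ↔ i ∈ transitions w' := by rw [h]
      simp only [transitions, mem_filter, mem_range, hprev, ← hlen, hi.trans (Nat.lt_succ_self _),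
        true_and] at hmem
      omega
    · rw [List.getD_eq_default _ _ (by omega), List.getD_eq_default _ _ (by omega)]
  have hpad : ∀ i, (1 :: w).getD i 1 = (1 :: w').getD i 1 := by
    intro i
    induction i with
    | zero => rfl
    | succ k ih => simpa only [List.getD_cons_succ] using hstep k ih
  refine List.ext_getElem hlen fun i h₁ h₂ => ?_
  rw [← List.getD_eq_getElem _ 1 h₁, ← List.getD_eq_getElem _ 1 h₂, hstep i (hpad i)]

theorem card_le_sum_choose {S : Finset (List (Fin 2))} {n s : ℕ} (hlen : ∀ c ∈ S, c.length = n)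
    (hs : ∀ c ∈ S, #(zeroDelFinset c) ≤ s) :
    #S ≤ ∑ k ∈ range (2 * s + 1), (n + 1).choose k := by
  have hmaps : Set.MapsTo transitions S
      ((range (2 * s + 1)).biUnion fun k => powersetCard k (range (n + 1))) := by
    intro c hc
    refine mem_biUnion.2 ⟨#(transitions c), mem_range.2 ?_, mem_powersetCard.2 ⟨?_, rfl⟩⟩
    · have := card_transitions_le c
      have := hs c hc
      omega
    · rw [← hlen c hc]
      exact filter_subset _ _
  calc #S ≤ #((range (2 * s + 1)).biUnion fun k => powersetCard k (range (n + 1))) :=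
        card_le_card_of_injOn transitions hmaps fun c hc c' hc' h =>
          eq_of_transitions_eq ((hlen c hc).trans (hlen c' hc').symm) h
    _ ≤ ∑ k ∈ range (2 * s + 1), #(powersetCard k (range (n + 1))) := card_biUnion_le
    _ = ∑ k ∈ range (2 * s + 1), (n + 1).choose k := by simp only [card_powersetCard, card_range]

theorem pow_sub_mul_sum_choose_le {x n a : ℕ} (hx : 1 ≤ x) (ha : a ≤ n) :
    x ^ (n - a) * ∑ k ∈ range (a + 1), n.choose k ≤ (x + 1) ^ n := by
  calc x ^ (n - a) * ∑ k ∈ range (a + 1), n.choose k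
      = ∑ k ∈ range (a + 1), x ^ (n - a) * n.choose k := mul_sum _ _ _
    _ ≤ ∑ k ∈ range (a + 1), x ^ (n - k) * n.choose k := by
        gcongr with k hk
        have := mem_range.1 hk
        omega
    _ ≤ ∑ k ∈ range (n + 1), x ^ (n - k) * n.choose k :=
        sum_le_sum_of_subset (range_subset_range.2 (by omega))
    _ = (x + 1) ^ n := by
        rw [add_comm x 1, add_pow]
        simp only [one_pow, one_mul, Nat.cast_id]

/-- For `m = 8 * s + r + 2` this is, after clearing denominators,
`4 ^ (m + 1) / 3 ^ (m + 1 - 2 * s) ≤ 2 ^ (m + 2) / (m - 2) - 2 ^ (m - 1) / (s + 1)`. -/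
theorem low_high_balance (s r : ℕ) (hr : r ≤ 7) :
    (8 * s + r) * (s + 1) * 2 ^ (r + 5) * 256 ^ s ≤ (8 - r) * 3 ^ (r + 3) * 729 ^ s := by
  induction s with
  | zero => interval_cases r <;> norm_num
  | succ s ih =>
    rcases lt_or_ge s 2 with hs | hs
    · interval_cases s <;> interval_cases r <;> norm_num
    · have hstep : 256 * ((8 * (s + 1) + r) * (s + 2)) ≤ 729 * ((8 * s + r) * (s + 1)) := by
        nlinarith
      calc (8 * (s + 1) + r) * (s + 1 + 1) * 2 ^ (r + 5) * 256 ^ (s + 1)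
          = 256 * ((8 * (s + 1) + r) * (s + 2)) * (2 ^ (r + 5) * 256 ^ s) := by ring
        _ ≤ 729 * ((8 * s + r) * (s + 1)) * (2 ^ (r + 5) * 256 ^ s) := by gcongr
        _ = 729 * ((8 * s + r) * (s + 1) * 2 ^ (r + 5) * 256 ^ s) := by ring
        _ ≤ 729 * ((8 - r) * 3 ^ (r + 3) * 729 ^ s) := by gcongr
        _ = (8 - r) * 3 ^ (r + 3) * 729 ^ (s + 1) := by ring

theorem sub_two_mul_add_le_two_pow {m s r H L : ℕ} (hm : m = 8 * s + r + 2) (hr : r ≤ 7)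
    (hH : (s + 1) * H ≤ 2 ^ (m - 1)) (hL : 3 ^ (m + 1 - 2 * s) * L ≤ 4 ^ (m + 1)) :
    (m - 2) * (H + L) ≤ 2 ^ (m + 2) := by
  subst hm
  rw [show 8 * s + r + 2 - 1 = 8 * s + r + 1 by omega] at hH
  rw [show 8 * s + r + 2 + 1 - 2 * s = 6 * s + r + 3 by omega] at hL
  rw [Nat.add_sub_cancel]
  have hpow : 4 ^ (8 * s + r + 2 + 1) = 2 ^ (8 * s + r + 1) * (2 ^ (r + 5) * 256 ^ s) := by
    rw [show (4 : ℕ) = 2 ^ 2 by rfl, show (256 : ℕ) = 2 ^ 8 by rfl, ← pow_mul, ← pow_mul,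
      ← pow_add, ← pow_add]
    ring_nf
  have h3 : 3 ^ (6 * s + r + 3) = 3 ^ (r + 3) * 729 ^ s := by
    rw [show (729 : ℕ) = 3 ^ 6 by rfl, ← pow_mul, ← pow_add]; ring_nf
  have hsum : (8 * s + r) + (8 - r) = 8 * (s + 1) := by omega
  refine Nat.le_of_mul_le_mul_left (c := (s + 1) * 3 ^ (6 * s + r + 3)) ?_ (by positivity)
  rw [hpow] at hL
  calc (s + 1) * 3 ^ (6 * s + r + 3) * ((8 * s + r) * (H + L))
      = (8 * s + r) * 3 ^ (6 * s + r + 3) * ((s + 1) * H)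
        + (8 * s + r) * (s + 1) * (3 ^ (6 * s + r + 3) * L) := by ring
    _ ≤ (8 * s + r) * 3 ^ (6 * s + r + 3) * 2 ^ (8 * s + r + 1)
        + (8 * s + r) * (s + 1) * (2 ^ (8 * s + r + 1) * (2 ^ (r + 5) * 256 ^ s)) := by
        gcongr
    _ = (8 * s + r) * 3 ^ (6 * s + r + 3) * 2 ^ (8 * s + r + 1)
        + 2 ^ (8 * s + r + 1) * ((8 * s + r) * (s + 1) * 2 ^ (r + 5) * 256 ^ s) := by ring
    _ ≤ (8 * s + r) * 3 ^ (6 * s + r + 3) * 2 ^ (8 * s + r + 1)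
        + 2 ^ (8 * s + r + 1) * ((8 - r) * 3 ^ (r + 3) * 729 ^ s) := by
        have := low_high_balance s r hr
        gcongr
    _ = ((8 * s + r) + (8 - r)) * 3 ^ (6 * s + r + 3) * 2 ^ (8 * s + r + 1) := by
        rw [h3]; ring
    _ = (s + 1) * 3 ^ (6 * s + r + 3) * 2 ^ (8 * s + r + 2 + 2) := by
        rw [hsum, show 8 * s + r + 2 + 2 = 8 * s + r + 1 + 3 by omega, pow_add]; ring

theorem card_mul_sub_two_le {C : Finset (List (Fin 2))} {m : ℕ} (hlen : ∀ c ∈ C, c.length = m)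
    (hdisj : (C : Set (List (Fin 2))).PairwiseDisjoint zeroDelFinset) :
    (m - 2) * #C ≤ 2 ^ (m + 2) := by
  rcases lt_or_ge m 2 with hm | hm
  · simp [Nat.sub_eq_zero_of_le hm.le]
  set s := (m - 2) / 8
  have hm : m = 8 * s + (m - 2) % 8 + 2 := by omega
  have hHigh : (s + 1) * #(C.filter fun c => s < #(zeroDelFinset c)) ≤ 2 ^ (m - 1) :=
    mul_card_le_of_pairwiseDisjoint (fun c hc => hlen c (mem_filter.1 hc).1)
      (hdisj.subset (filter_subset _ _)) fun c hc => (mem_filter.1 hc).2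
  have hLow : 3 ^ (m + 1 - 2 * s) * #(C.filter fun c => ¬ s < #(zeroDelFinset c)) ≤ 4 ^ (m + 1) :=
    calc _ ≤ 3 ^ (m + 1 - 2 * s) * ∑ k ∈ range (2 * s + 1), (m + 1).choose k := by
          gcongr
          exact card_le_sum_choose (fun c hc => hlen c (mem_filter.1 hc).1)
            fun c hc => not_lt.1 (mem_filter.1 hc).2
      _ ≤ 4 ^ (m + 1) := pow_sub_mul_sum_choose_le (by norm_num) (by omega)
  rw [← card_filter_add_card_filter_not fun c => s < #(zeroDelFinset c)]
  exact sub_two_mul_add_le_two_pow hm (by omega) hHigh hLow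

/-- Let `m ≥ 3` and let `C ⊆ {0,1}^m` be a zero-deletion code.
Then `|C| ≤ 2^{m+2}/(m−2)`. -/
theorem stmt1 (m : ℕ) (hm : 3 ≤ m) (C : Set (List (Fin 2)))
    (hlen : ∀ c ∈ C, c.length = m)
    (hcode : ∀ c ∈ C, ∀ c' ∈ C, c ≠ c' →
      ∀ v, v ∈ zeroDelBall c → v ∈ zeroDelBall c' → False) :
    (C.ncard : ℝ) ≤ 2 ^ (m + 2) / ((m : ℝ) - 2) := by
  have hfin : C.Finite :=
    (wordsOfLength (Fin 2) m).finite_toSet.subset fun c hc => mem_wordsOfLength.2 (hlen c hc)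
  lift C to Finset (List (Fin 2)) using hfin
  have hdisj : (C : Set (List (Fin 2))).PairwiseDisjoint zeroDelFinset :=
    fun c hc c' hc' hne => disjoint_left.2 fun v hv hv' => hcode c hc c' hc' hne v
      (coe_zeroDelFinset c ▸ hv) (coe_zeroDelFinset c' ▸ hv')
  have hbound : ((m - 2 : ℕ) : ℝ) * #C ≤ 2 ^ (m + 2) := by
    exact_mod_cast card_mul_sub_two_le hlen hdisj
  have hm2 : (0 : ℝ) < m - 2 := by
    have : (3 : ℝ) ≤ m := by exact_mod_cast hm
    linarith
  rw [Nat.cast_sub (by omega), Nat.cast_ofNat] at hbound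
  rw [Set.ncard_coe_finset, le_div_iff₀ hm2]
  linarith
end

section
/- Let q ≥ 2, n ≥ 1, and let A = {α_1, …, α_k} ⊆ Σ_q × Σ_q be a length-two label set such that the labeling map L_A : Σ_q^n → {0,1,…,k}^n is injective, and let p ≥ k+1 be a prime power. Then there exists a single-substitution A-labeling code C ⊆ Σ_q^n with |C| ≥ q^n / (p·((p−1)n+1)). -/
/-!
This is the Hamming-code construction over a field `F` with `p` elements. Choose an extension
`K ⊇ F` with `(p - 1) n < |K| = p ^ m ≤ p ((p - 1) n + 1)` and a generator `g` of `Kˣ`, embed the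
labels `{0, …, k}` into `F` by `φ`, and take the syndrome `v ↦ ∑ φ (v i) • g ^ i ∈ K`. A relation
`a g ^ i + b g ^ j = 0` with `0 < j - i < n` and `b ≠ 0` would put `g ^ (j - i)` in `F`, hence
`p ^ m - 1 ∣ (j - i) (p - 1)`, which is too small; so two label sequences with equal syndromes
are at Hamming distance at least `3` or equal. By pigeonhole some fibre of `x ↦ syndrome (L_A x)`
has at least `q ^ n / p ^ m` elements, and the injectivity of `L_A` makes it a code.
-/

/-- The `A`-labeling sequence of `x`, where the length-two label set
`A = {α₁ < ⋯ < α_k}` is given by the tuple `α` (1-indexed labels; `0` means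
"no label starts here", and the last coordinate is always `0`). -/
noncomputable def labelFun {q k n : ℕ} (α : Fin k → Fin q × Fin q)
    (x : Fin n → Fin q) : Fin n → Fin (k + 1) := fun i =>
  if h : (i : ℕ) + 1 < n then
    if h2 : ∃ j, α j = (x i, x ⟨(i : ℕ) + 1, h⟩) then (h2.choose).succ else 0
  else 0

open Function

theorem Nat.exists_pow_gt_and_pow_le_mul {b : ℕ} (hb : 1 < b) (x : ℕ) :
    ∃ m ≠ 0, x < b ^ m ∧ b ^ m ≤ b * (x + 1) :=
  ⟨Nat.log b x + 1, Nat.succ_ne_zero _, Nat.lt_pow_succ_log_self hb x, by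
    rw [pow_succ, mul_comm]
    exact Nat.mul_le_mul_left b (Nat.pow_log_le_add_one b x)⟩

theorem exists_finiteField_extension_card_eq {p : ℕ} (hp : IsPrimePow p) {m : ℕ} (hm : m ≠ 0) :
    ∃ (F K : Type) (_ : Field F) (_ : Field K) (_ : Fintype F) (_ : Fintype K)
      (_ : Algebra F K), Fintype.card F = p ∧ Fintype.card K = p ^ m := by
  obtain ⟨r, e, hr, he, rfl⟩ := hp
  have := Fact.mk hr.nat_prime
  have : NeZero m := ⟨hm⟩
  have hF : Nat.card (GaloisField r e) = r ^ e := GaloisField.card r e he.ne'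
  refine ⟨GaloisField r e, FiniteField.Extension (GaloisField r e) r m, inferInstance,
    inferInstance, Fintype.ofFinite _, Fintype.ofFinite _, inferInstance, ?_, ?_⟩
  · rw [Fintype.card_eq_nat_card, hF]
  · rw [Fintype.card_eq_nat_card, FiniteField.natCard_extension, hF]

theorem FiniteField.exists_orderOf_eq_card_sub_one (K : Type*) [Field K] [Fintype K] :
    ∃ g : K, orderOf g = Fintype.card K - 1 := by
  classical
  obtain ⟨g, hg⟩ := IsCyclic.exists_ofOrder_eq_natCard (α := Kˣ)
  exact ⟨g, by rw [orderOf_units, hg, Nat.card_eq_fintype_card, Fintype.card_units]⟩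

section PrimitivePowers

variable {F K : Type*} [Field F] [Fintype F] [Field K] [Fintype K] [Algebra F K]
  {g : K}

theorem ne_zero_of_orderOf_eq_card_sub_one (hg : orderOf g = Fintype.card K - 1) : g ≠ 0 := by
  rintro rfl
  have := Fintype.one_lt_card (α := K)
  rw [orderOf_eq_zero_iff'.2 fun n hn h => by simp [hn.ne'] at h] at hg
  omega

theorem pow_ne_algebraMap_of_orderOf_eq (hg : orderOf g = Fintype.card K - 1) {d : ℕ}
    (hd : 0 < d) (hdF : d * (Fintype.card F - 1) < Fintype.card K - 1) (c : F) :
    g ^ d ≠ algebraMap F K c := by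
  intro h
  have hc : c ≠ 0 := by
    rintro rfl
    exact pow_ne_zero d (ne_zero_of_orderOf_eq_card_sub_one hg) (by simpa using h)
  have hpow : g ^ (d * (Fintype.card F - 1)) = 1 := by
    rw [pow_mul, h, ← map_pow, FiniteField.pow_card_sub_one_eq_one c hc, map_one]
  have hF := Fintype.one_lt_card (α := F)
  have := Nat.le_of_dvd (Nat.mul_pos hd (by omega)) (hg ▸ orderOf_dvd_of_pow_eq_one hpow)
  omega

theorem smul_pow_add_smul_pow_add_ne_zero (hg : orderOf g = Fintype.card K - 1) {d : ℕ}
    (hd : 0 < d) (hdF : d * (Fintype.card F - 1) < Fintype.card K - 1) (i : ℕ) (a : F) {b : F}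
    (hb : b ≠ 0) : a • g ^ i + b • g ^ (i + d) ≠ 0 := by
  intro h
  have hgi : g ^ i ≠ 0 := pow_ne_zero i (ne_zero_of_orderOf_eq_card_sub_one hg)
  refine pow_ne_algebraMap_of_orderOf_eq hg hd hdF (-a / b) ?_
  rw [map_div₀, map_neg, eq_div_iff ((map_ne_zero _).2 hb)]
  apply mul_left_cancel₀ hgi
  rw [Algebra.smul_def, Algebra.smul_def, pow_add] at h
  linear_combination h

theorem linearCombination_pow_ne_zero [DecidableEq F] {n : ℕ}
    (hg : orderOf g = Fintype.card K - 1) (hn : (Fintype.card F - 1) * n < Fintype.card K)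
    {w : Fin n → F} (hw : w ≠ 0)
    (hw2 : hammingNorm w ≤ 2) :
    Fintype.linearCombination F (fun i : Fin n => g ^ (i : ℕ)) w ≠ 0 := by
  set D : Finset (Fin n) := {i | w i ≠ 0}
  have hsum : Fintype.linearCombination F (fun i : Fin n => g ^ (i : ℕ)) w =
      ∑ i ∈ D, w i • g ^ (i : ℕ) := by
    rw [Fintype.linearCombination_apply, Finset.sum_filter_of_ne]
    intro i _ hi hwi
    exact hi (by rw [hwi, zero_smul])
  have hmem : ∀ i ∈ D, w i ≠ 0 := fun i hi => (Finset.mem_filter.1 hi).2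
  have hD0 : 0 < D.card := hammingNorm_pos_iff.2 hw
  rw [hsum]
  obtain hD1 | hD2 : D.card = 1 ∨ D.card = 2 := by change D.card ≤ 2 at hw2; omega
  · obtain ⟨a, ha⟩ := Finset.card_eq_one.1 hD1
    rw [ha, Finset.sum_singleton]
    exact smul_ne_zero (hmem a (ha ▸ Finset.mem_singleton_self a))
      (pow_ne_zero _ (ne_zero_of_orderOf_eq_card_sub_one hg))
  · have hgap : ∀ a b : Fin n, (a : ℕ) < b →
        (b - a : ℕ) * (Fintype.card F - 1) < Fintype.card K - 1 := by
      intro a b hab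
      have := Nat.mul_le_mul_left (Fintype.card F - 1) (show (b - a : ℕ) + 1 ≤ n by omega)
      rw [mul_add, mul_comm] at this
      have := Fintype.one_lt_card (α := F)
      omega
    obtain ⟨a, b, hab, hab'⟩ := Finset.card_eq_two.1 hD2
    rw [hab', Finset.sum_pair hab]
    rcases lt_or_gt_of_ne (Fin.val_ne_of_ne hab) with h | h
    · rw [← Nat.add_sub_cancel' h.le]
      exact smul_pow_add_smul_pow_add_ne_zero hg (by omega) (hgap a b h) _ _
        (hmem b (by simp [hab']))
    · rw [add_comm, ← Nat.add_sub_cancel' h.le]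
      exact smul_pow_add_smul_pow_add_ne_zero hg (by omega) (hgap b a h) _ _
        (hmem a (by simp [hab']))

theorem eq_of_linearCombination_pow_comp_eq [DecidableEq F] {V : Type*} [DecidableEq V]
    {n : ℕ} (hg : orderOf g = Fintype.card K - 1) (hn : (Fintype.card F - 1) * n < Fintype.card K)
    (φ : V ↪ F) {u v : Fin n → V}
    (huv : Fintype.linearCombination F (fun i : Fin n => g ^ (i : ℕ)) (φ ∘ u) =
      Fintype.linearCombination F (fun i : Fin n => g ^ (i : ℕ)) (φ ∘ v))
    (hd : hammingDist u v ≤ 2) : u = v := by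
  by_contra hne
  refine linearCombination_pow_ne_zero hg hn (w := φ ∘ v - φ ∘ u) ?_ ?_ ?_
  · exact sub_ne_zero.2 fun h => hne (φ.injective.comp_left h).symm
  · rw [← neg_add_eq_sub, ← hammingDist_eq_hammingNorm]
    exact (hammingDist_comp (fun _ => φ) fun _ => φ.injective).trans_le hd
  · rw [map_sub, huv, sub_self]

end PrimitivePowers

theorem exists_large_code_of_syndrome {X ι V S : Type*} [Fintype X] [Fintype ι] [DecidableEq V]
    [Fintype S] [Nonempty S] {L : X → ι → V} (hL : Injective L) (s : (ι → V) → S)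
    (hs : ∀ u v, s u = s v → hammingDist u v ≤ 2 → u = v) :
    ∃ C : Set X, (Fintype.card X : ℝ) / Fintype.card S ≤ C.ncard ∧
      ∀ x ∈ C, ∀ x' ∈ C, x ≠ x' → ∀ v : ι → V,
        hammingDist v (L x) ≤ 1 → hammingDist v (L x') ≤ 1 → False := by
  classical
  obtain ⟨y, hy⟩ := Fintype.exists_le_card_fiber_of_nsmul_le_card (s ∘ L)
    (b := (Fintype.card X : ℝ) / Fintype.card S)
    (by rw [nsmul_eq_mul, mul_div_cancel₀ _ (by positivity)])
  refine ⟨{x | s (L x) = y}, ?_, ?_⟩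
  · simpa [Set.ncard_eq_toFinset_card'] using hy
  · rintro x hx x' hx' hne v hv hv'
    refine hne (hL (hs _ _ (hx.trans hx'.symm) ?_))
    calc hammingDist (L x) (L x') ≤ hammingDist (L x) v + hammingDist v (L x') :=
          hammingDist_triangle _ _ _
      _ ≤ 2 := by rw [hammingDist_comm] at hv; omega

theorem stmt5_general (q n k p : ℕ)
    (α : Fin k → Fin q × Fin q)
    (hLinj : Function.Injective (labelFun (n := n) α))
    (hp : k + 1 ≤ p) (hpp : IsPrimePow p) :
    ∃ C : Set (Fin n → Fin q),
      (q : ℝ) ^ n / ((p : ℝ) * (((p : ℝ) - 1) * (n : ℝ) + 1)) ≤ (C.ncard : ℝ) ∧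
      ∀ x ∈ C, ∀ x' ∈ C, x ≠ x' →
        ∀ v : Fin n → Fin (k + 1),
          hammingDist v (labelFun α x) ≤ 1 → hammingDist v (labelFun α x') ≤ 1 → False := by
  classical
  obtain ⟨m, hm, hnm, hmp⟩ := Nat.exists_pow_gt_and_pow_le_mul hpp.one_lt ((p - 1) * n)
  obtain ⟨F, K, _, _, _, _, _, hF, hK⟩ := exists_finiteField_extension_card_eq hpp hm
  obtain ⟨g, hg⟩ := FiniteField.exists_orderOf_eq_card_sub_one K
  obtain ⟨φ⟩ : Nonempty (Fin (k + 1) ↪ F) :=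
    Function.Embedding.nonempty_of_card_le (by simpa [hF])
  obtain ⟨C, hC, hsep⟩ := exists_large_code_of_syndrome hLinj
    (fun v => Fintype.linearCombination F (fun i : Fin n => g ^ (i : ℕ)) (φ ∘ v))
    fun u v => eq_of_linearCombination_pow_comp_eq hg (by rwa [hF, hK]) φ
  refine ⟨C, le_trans ?_ hC, hsep⟩
  have hcardK : ((p ^ m : ℕ) : ℝ) ≤ p * ((p - 1) * n + 1) := by
    rw [← Nat.cast_pred hpp.pos]
    exact_mod_cast hmp
  rw [Fintype.card_fun, Fintype.card_fin, Fintype.card_fin, hK, Nat.cast_pow q n]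
  have hpm : (0 : ℝ) < (p ^ m : ℕ) := by exact_mod_cast pow_pos hpp.pos m
  exact div_le_div_of_nonneg_left (by positivity) hpm hcardK

/-- If the labeling map `L_A : Σ_q^n → {0,…,k}^n` of a length-two
label set `A = {α₁ < ⋯ < α_k}` is injective and `p ≥ k+1` is a prime power, then
there exists a single-substitution `A`-labeling code `C ⊆ Σ_q^n` (the radius-one
Hamming balls around the labelings of distinct codewords are disjoint) with
`|C| ≥ q^n / (p·((p−1)n+1))`. -/
theorem stmt5 (q n k p : ℕ) (hq : 2 ≤ q) (hn : 1 ≤ n)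
    (α : Fin k → Fin q × Fin q) (hlex : StrictMono fun j => toLex (α j))
    (hLinj : Function.Injective (labelFun (n := n) α))
    (hp : k + 1 ≤ p) (hpp : IsPrimePow p) :
    ∃ C : Set (Fin n → Fin q),
      (q : ℝ) ^ n / ((p : ℝ) * (((p : ℝ) - 1) * (n : ℝ) + 1)) ≤ (C.ncard : ℝ) ∧
      ∀ x ∈ C, ∀ x' ∈ C, x ≠ x' →
        ∀ v : Fin n → Fin (k + 1),
          hammingDist v (labelFun α x) ≤ 1 → hammingDist v (labelFun α x') ≤ 1 → False :=
  stmt5_general q n k p α hLinj hp hpp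
end

section
/- Let S = {(0,1),(1,0),(2,0),(2,1),(2,2),(2,3),(3,0),(3,1),(3,2),(3,3)} ⊆ Σ_4 × Σ_4 (the label set {AC, CA, GA, GC, GG, GT, TA, TC, TG, TT} under A,C,G,T ↦ 0,1,2,3). For every integer k ≥ 2 there exist an integer n with 2(n−k) ≤ ⌈log_2 k⌉ + 8 and a code C ⊆ Σ_4^n with |C| = 4^k that is a single-deletion S-labeling code. -/
/-- The label set `{AC, CA, GA, GC, GG, GT, TA, TC, TG, TT}` over `Σ₄`,
under `A,C,G,T ↦ 0,1,2,3`, listed in lexicographic order. -/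
def S10 : Fin 10 → Fin 4 × Fin 4 :=
  ![(0,1),(1,0),(2,0),(2,1),(2,2),(2,3),(3,0),(3,1),(3,2),(3,3)]

theorem decide_le_eq_or {α : Type*} [LinearOrder α] (a b d : α) :
    decide (a ≤ d) = decide (a ≤ b) ∨ decide (a ≤ d) = decide (b ≤ d) := by
  simp only [decide_eq_decide]
  grind

namespace List

variable {α : Type*}

theorem cons_append_eq_append_cons {a : α} {B : List α} (hB : ∀ b ∈ B, b = a) (C : List α) :
    a :: (B ++ C) = B ++ a :: C := by
  induction B with
  | nil => rfl
  | cons b B ih =>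
    obtain ⟨rfl, hB⟩ := forall_mem_cons.1 hB
    rw [cons_append, ih hB, cons_append]

theorem eq_take_append_cons_drop_eraseIdx {l : List α} {i : ℕ} (h : i < l.length) :
    l = (l.eraseIdx i).take i ++ l[i] :: (l.eraseIdx i).drop i := by
  have hi : (l.take i).length = i := length_take_of_le h.le
  rw [eraseIdx_eq_take_drop_succ, take_left' hi, drop_left' hi, ← drop_eq_getElem_cons h,
    take_append_drop]

theorem exists_append_of_eraseIdx_eq_of_le {u u' : List α} {i j : ℕ} (hi : i < u.length)
    (hj : j < u'.length) (hij : i ≤ j) (h : u.eraseIdx i = u'.eraseIdx j) :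
    ∃ A B C x y, u = A ++ x :: (B ++ C) ∧ u' = A ++ (B ++ y :: C) := by
  set v := u.eraseIdx i
  refine ⟨v.take i, (v.drop i).take (j - i), v.drop j, u[i], u'[j], ?_, ?_⟩
  · have hdrop : v.drop j = (v.drop i).drop (j - i) := by rw [drop_drop, Nat.add_sub_cancel' hij]
    rw [hdrop, take_append_drop]
    exact eq_take_append_cons_drop_eraseIdx hi
  · rw [← append_assoc, ← take_add, Nat.add_sub_cancel' hij, h]
    exact eq_take_append_cons_drop_eraseIdx hj

theorem eq_of_eraseIdx_eq {u u' : List α} {i j : ℕ} (hlen : u.length = u'.length)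
    (h : u.eraseIdx i = u'.eraseIdx j)
    (H : ∀ A B C x y,
      (u = A ++ x :: (B ++ C) ∧ u' = A ++ (B ++ y :: C)) ∨
        (u' = A ++ x :: (B ++ C) ∧ u = A ++ (B ++ y :: C)) →
      A ++ x :: (B ++ C) = A ++ (B ++ y :: C)) :
    u = u' := by
  have hlen' := congrArg length h
  simp only [length_eraseIdx] at hlen'
  by_cases hi : i < u.length <;> by_cases hj : j < u'.length
  · rcases le_total i j with hij | hji
    · obtain ⟨A, B, C, x, y, rfl, rfl⟩ := exists_append_of_eraseIdx_eq_of_le hi hj hij h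
      exact H A B C x y (.inl ⟨rfl, rfl⟩)
    · obtain ⟨A, B, C, x, y, rfl, rfl⟩ := exists_append_of_eraseIdx_eq_of_le hj hi hji h.symm
      exact (H A B C x y (.inr ⟨rfl, rfl⟩)).symm
  · simp only [hi, hj, if_true, if_false] at hlen'; omega
  · simp only [hi, hj, if_true, if_false] at hlen'; omega
  · rwa [eraseIdx_of_length_le (not_lt.1 hi), eraseIdx_of_length_le (not_lt.1 hj)] at h

/-- The Varshamov–Tenengolts weight `∑ᵢ (i + 1) sᵢ`. -/
def vtWeight : List Bool → ℕ
  | [] => 0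
  | c :: l => c.toNat + vtWeight l + l.count true

theorem vtWeight_append (A L : List Bool) :
    vtWeight (A ++ L) = vtWeight A + vtWeight L + A.length * L.count true := by
  induction A with
  | nil => simp [vtWeight]
  | cons a A ih => simp only [cons_append, vtWeight, ih, count_append, length_cons]; ring

theorem eq_of_vtWeight_modEq {A B C : List Bool} {c c' : Bool} {M : ℕ}
    (hM : A.length + B.length + 2 ≤ M)
    (h : vtWeight (A ++ c :: (B ++ C)) ≡ vtWeight (A ++ (B ++ c' :: C)) [MOD M]) :
    A ++ c :: (B ++ C) = A ++ (B ++ c' :: C) := by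
  set K := vtWeight A + vtWeight B + vtWeight C + C.count true + B.length * C.count true +
    A.length * B.count true + A.length * C.count true
  have hl : vtWeight (A ++ c :: (B ++ C)) = K + ((A.length + 1) * c.toNat + B.count true) := by
    simp only [vtWeight_append, vtWeight, count_append, count_cons]
    cases c <;> simp [K] <;> ring
  have hr : vtWeight (A ++ (B ++ c' :: C)) = K + (A.length + B.length + 1) * c'.toNat := by
    simp only [vtWeight_append, vtWeight, count_append, count_cons]
    cases c' <;> simp [K] <;> ring
  rw [hl, hr] at h
  have hB : B.count true ≤ B.length := count_le_length
  have key := (Nat.ModEq.add_left_cancel' K h).eq_of_lt_of_lt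
    (by cases c <;> simp only [Bool.toNat_true, Bool.toNat_false, mul_one, mul_zero] <;> omega)
    (by cases c' <;> simp only [Bool.toNat_true, Bool.toNat_false, mul_one, mul_zero] <;> omega)
  obtain ⟨rfl, hB⟩ : c = c' ∧ ∀ b ∈ B, b = c := by
    cases c <;> cases c' <;>
      simp only [Bool.toNat_true, Bool.toNat_false, mul_one, mul_zero, zero_add] at key
    · exact ⟨rfl, by simpa using count_eq_zero.1 key⟩
    · omega
    · omega
    · exact ⟨rfl, fun b hb => (count_eq_length.1 (by omega) b hb).symm⟩
  exact congrArg (A ++ ·) (cons_append_eq_append_cons hB C)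

theorem eq_of_eraseIdx_eq_of_vtWeight_modEq {s s' : List Bool} {i j M : ℕ}
    (hlen : s.length = s'.length) (hM : s.length < M) (h : vtWeight s ≡ vtWeight s' [MOD M])
    (he : s.eraseIdx i = s'.eraseIdx j) : s = s' := by
  refine eq_of_eraseIdx_eq hlen he fun A B C x y hs => ?_
  rcases hs with ⟨rfl, rfl⟩ | ⟨rfl, rfl⟩
  · exact eq_of_vtWeight_modEq (by simp at hM; omega) h
  · exact eq_of_vtWeight_modEq (by simp at hM; omega) h.symm

section LinearOrder

variable [LinearOrder α]

def signature : List α → List Bool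
  | a :: b :: l => decide (a ≤ b) :: signature (b :: l)
  | _ => []

theorem length_signature : ∀ l : List α, (signature l).length = l.length - 1
  | a :: b :: l => by simp [signature, length_signature (b :: l)]
  | [] | [_] => rfl

theorem signature_drop : ∀ (l : List α) (i : ℕ), signature (l.drop i) = (signature l).drop i
  | a :: b :: l, i + 1 => by simp [signature, signature_drop (b :: l) i]
  | l, 0 => rfl
  | [], _ + 1 | [_], _ + 1 => by simp [signature]

theorem signature_take_succ :
    ∀ (l : List α) (k : ℕ), signature (l.take (k + 1)) = (signature l).take k
  | a :: b :: l, k + 1 => by simp [signature, ← signature_take_succ (b :: l) k]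
  | a :: b :: l, 0 => rfl
  | [], _ | [_], _ => by simp [signature]

theorem exists_signature_eraseIdx :
    ∀ (l : List α) (i : ℕ), ∃ p, signature (l.eraseIdx i) = (signature l).eraseIdx p
  | a :: b :: d :: l, 1 => by
      rcases decide_le_eq_or a b d with h | h
      · exact ⟨1, by simp [signature, h]⟩
      · exact ⟨0, by simp [signature, h]⟩
  | a :: b :: l, i + 2 => by
      obtain ⟨p, hp⟩ := exists_signature_eraseIdx (b :: l) (i + 1)
      exact ⟨p + 1, by simpa [signature] using hp⟩
  | [a, b], 1 => ⟨0, rfl⟩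
  | [], _ | [_], 0 | _ :: _ :: _, 0 => ⟨0, rfl⟩
  | [_], _ + 1 => ⟨0, rfl⟩

/-- Each comparison along `a :: B ++ [c]` equals the next one, so all of them agree. -/
theorem isChain_of_signature_cons_eq_signature_append :
    ∀ (a : α) (B : List α) (c : α), signature (a :: B) = signature (B ++ [c]) →
      IsChain (· ≤ ·) (a :: B ++ [c]) ∨ IsChain (· > ·) (a :: B ++ [c])
  | a, [], c, _ => by
      rcases le_or_gt a c with h | h
      · exact .inl (by simpa using h)
      · exact .inr (by simpa using h)
  | a, b :: B, c, h => by
      obtain ⟨d, T, hT⟩ : ∃ d T, B ++ [c] = d :: T :=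
        ⟨_, _, (cons_head_tail (by simp)).symm⟩
      simp only [cons_append, hT, signature, cons.injEq] at h ⊢
      have ih := isChain_of_signature_cons_eq_signature_append b B c (by rw [hT]; exact h.2)
      simp only [cons_append, hT, isChain_cons_cons] at ih ⊢
      rcases ih with ih | ih
      · exact .inl ⟨by simpa [ih.1] using h.1, ih⟩
      · exact .inr ⟨by simpa [not_le.2 ih.1] using h.1, ih⟩

theorem forall_eq_of_signature_cons_eq_signature_append {a : α} {B : List α}
    (h : signature (a :: B) = signature (B ++ [a])) : ∀ b ∈ B, b = a := by
  intro b hb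
  rcases isChain_of_signature_cons_eq_signature_append a B a h with hc | hc <;>
    simp only [isChain_iff_pairwise, cons_append, pairwise_cons, pairwise_append, mem_append,
      mem_singleton] at hc
  · exact le_antisymm (hc.2.2.2 b hb a rfl) (hc.1 b (.inl hb))
  · exact absurd (hc.1 a (.inr rfl)) (lt_irrefl a)

theorem eq_of_signature_eq {A B C : List α} {a : α}
    (h : signature (A ++ a :: (B ++ C)) = signature (A ++ (B ++ a :: C))) :
    A ++ a :: (B ++ C) = A ++ (B ++ a :: C) := by
  have hB := congrArg (fun s => (s.drop A.length).take B.length) h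
  simp only [← signature_drop, drop_left, ← signature_take_succ] at hB
  have hBa : (B ++ a :: C).take (B.length + 1) = B ++ [a] := by simp [take_append]
  rw [take_succ_cons, take_left' rfl, hBa] at hB
  exact congrArg (A ++ ·) (cons_append_eq_append_cons
    (forall_eq_of_signature_cons_eq_signature_append hB) C)

end LinearOrder

theorem eq_of_sum_val_modEq {q : ℕ} {A B C : List (Fin q)} {x y : Fin q}
    (h : ((A ++ x :: (B ++ C)).map Fin.val).sum ≡
      ((A ++ (B ++ y :: C)).map Fin.val).sum [MOD q]) :
    x = y := by
  simp only [map_append, map_cons, sum_append, sum_cons] at h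
  have h' : x.val + ((A.map Fin.val).sum + (B.map Fin.val).sum + (C.map Fin.val).sum) ≡
      y.val + ((A.map Fin.val).sum + (B.map Fin.val).sum + (C.map Fin.val).sum) [MOD q] := by
    convert h using 1 <;> ring
  exact Fin.ext ((Nat.ModEq.add_right_cancel' _ h').eq_of_lt_of_lt x.2 y.2)

/-- Tenengolts' code. A deletion in `u` is a deletion in `signature u`, so the VT weight forces
equal signatures; the letter sum identifies the deleted letter, and equal signatures force the
two insertion points into one run of that letter. -/
theorem eq_of_eraseIdx_eq_of_sum_modEq_of_vtWeight_modEq {q : ℕ} {u u' : List (Fin q)} {i j : ℕ}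
    (hlen : u.length = u'.length)
    (hsum : (u.map Fin.val).sum ≡ (u'.map Fin.val).sum [MOD q])
    (hvt : vtWeight (signature u) ≡ vtWeight (signature u') [MOD u.length])
    (he : u.eraseIdx i = u'.eraseIdx j) : u = u' := by
  rcases eq_or_ne u [] with rfl | hu
  · exact (length_eq_zero_iff.1 hlen.symm).symm
  have hsg : signature u = signature u' := by
    obtain ⟨p, hp⟩ := exists_signature_eraseIdx u i
    obtain ⟨p', hp'⟩ := exists_signature_eraseIdx u' j
    refine eq_of_eraseIdx_eq_of_vtWeight_modEq (by simp [length_signature, hlen]) ?_ hvt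
      (hp.symm.trans (he ▸ hp'))
    simpa [length_signature] using length_pos_iff.2 hu
  refine eq_of_eraseIdx_eq hlen he fun A B C x y hu => ?_
  rcases hu with ⟨rfl, rfl⟩ | ⟨rfl, rfl⟩
  · obtain rfl := eq_of_sum_val_modEq hsum
    exact eq_of_signature_eq hsg
  · obtain rfl := eq_of_sum_val_modEq hsum.symm
    exact eq_of_signature_eq hsg.symm

theorem exists_dropLast_eraseIdx_append_singleton (w : List α) (a : α) (i : ℕ) :
    ∃ i', ((w ++ [a]).eraseIdx i).dropLast = w.eraseIdx i' := by
  rcases lt_or_ge i w.length with hi | hi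
  · exact ⟨i, by rw [eraseIdx_append_of_lt_length hi, dropLast_concat]⟩
  rw [eraseIdx_append_of_length_le hi]
  rcases Nat.eq_zero_or_pos (i - w.length) with h | h
  · exact ⟨w.length - 1, by simp [h]⟩
  · exact ⟨w.length, by
      rw [eraseIdx_of_length_le (l := [a]) (by simpa), dropLast_concat,
        eraseIdx_of_length_le le_rfl]⟩

end List

theorem exists_eraseIdx_of_mem_delBall1 {σ : Type*} {u v : List σ} (h : v ∈ delBall1 u) :
    ∃ i, v = u.eraseIdx i := by
  rcases h with rfl | ⟨i, -, rfl⟩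
  · exact ⟨v.length, (List.eraseIdx_of_length_le le_rfl).symm⟩
  · exact ⟨i, rfl⟩

theorem exists_eraseIdx_eq_of_mem_delBall1_append_singleton {σ : Type*} {w w' v : List σ}
    {a : σ} (hv : v ∈ delBall1 (w ++ [a])) (hv' : v ∈ delBall1 (w' ++ [a])) :
    ∃ i j, w.eraseIdx i = w'.eraseIdx j := by
  obtain ⟨i, rfl⟩ := exists_eraseIdx_of_mem_delBall1 hv
  obtain ⟨j, hj⟩ := exists_eraseIdx_of_mem_delBall1 hv'
  obtain ⟨i', hi'⟩ := List.exists_dropLast_eraseIdx_append_singleton w a i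
  obtain ⟨j', hj'⟩ := List.exists_dropLast_eraseIdx_append_singleton w' a j
  exact ⟨i', j', hi'.symm.trans (hj ▸ hj')⟩

namespace S10

def label : Fin 4 → Fin 4 → Fin 11 :=
  ![![0, 1, 0, 0], ![2, 0, 0, 0], ![3, 4, 5, 6], ![7, 8, 9, 10]]

theorem labelFun_apply {n : ℕ} (x : Fin n → Fin 4) (i : Fin n) (h : (i : ℕ) + 1 < n) :
    labelFun S10 x i = label (x i) (x ⟨i + 1, h⟩) := by
  have hmem : ∀ j p, S10 j = p → j.succ = label p.1 p.2 := by decide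
  have hnot : ∀ p, (¬ ∃ j, S10 j = p) → label p.1 p.2 = 0 := by decide
  rw [labelFun, dif_pos h]
  split_ifs with h2
  · exact hmem _ _ h2.choose_spec
  · exact (hnot _ h2).symm

def labelWord {m : ℕ} (x : Fin (m + 1) → Fin 4) : List (Fin 11) :=
  List.ofFn fun i : Fin m => label (x i.castSucc) (x i.succ)

theorem ofFn_labelFun {m : ℕ} (x : Fin (m + 1) → Fin 4) :
    List.ofFn (labelFun S10 x) = labelWord x ++ [0] := by
  rw [List.ofFn_succ', List.concat_eq_append, labelWord]
  congr 2
  · funext i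
    exact labelFun_apply x _ (by simp)
  · simp [labelFun]

theorem label_ne_zero {a : Fin 4} (ha : 2 ≤ a) (b : Fin 4) : label a b ≠ 0 := by
  revert a b; decide

theorem eq_of_label_eq {a b a' b' : Fin 4} (h : label a b = label a' b') (h0 : label a b ≠ 0) :
    a = a' ∧ b = b' := by
  revert a b a' b'; decide

theorem eq_of_label_eq_zero {a b c : Fin 4} (hab : label a b = 0) (hbc : label b c = 0) :
    b = a := by
  revert a b c; decide

theorem eq_of_labelWord_eq {m : ℕ} {x x' : Fin (m + 2) → Fin 4} (h0 : 2 ≤ x 0)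
    (hl : 2 ≤ x (Fin.last m).castSucc) (h : labelWord x = labelWord x') : x = x' := by
  have hw : ∀ i : Fin (m + 1),
      label (x i.castSucc) (x i.succ) = label (x' i.castSucc) (x' i.succ) :=
    congrFun (List.ofFn_injective h)
  funext i
  induction i using Fin.induction with
  | zero => exact (eq_of_label_eq (hw 0) (label_ne_zero h0 _)).1
  | succ i ih =>
    by_cases hi : label (x i.castSucc) (x i.succ) = 0
    · obtain ⟨j, rfl⟩ : ∃ j : Fin m, j.castSucc = i :=
        Fin.exists_castSucc_eq.2 (by rintro rfl; exact label_ne_zero hl _ hi)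
      rw [Fin.succ_castSucc] at hi ⊢
      by_cases hj : label (x j.succ.castSucc) (x j.succ.succ) = 0
      · have hi' := (hw j.castSucc).symm.trans hi
        have hj' := (hw j.succ).symm.trans hj
        rw [Fin.succ_castSucc] at hi'
        rw [eq_of_label_eq_zero hi hj, eq_of_label_eq_zero hi' hj', ih]
      · exact (eq_of_label_eq (hw j.succ) hj).1
    · exact (eq_of_label_eq (hw i) hi).2

/-- `(a, b, c, y)` is sent to the word `(2 + a) y (2 + b) c`. -/
def encode {m : ℕ} : Fin 2 × Fin 2 × Fin 4 × (Fin m → Fin 4) → Fin (m + 3) → Fin 4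
  | (a, b, c, y) =>
    Fin.cons (Fin.natAdd 2 a : Fin 4) (Fin.snoc (Fin.snoc y (Fin.natAdd 2 b : Fin 4)) c)

theorem encode_injective {m : ℕ} : Function.Injective (encode (m := m)) := by
  rintro ⟨a, b, c, y⟩ ⟨a', b', c', y'⟩ h
  dsimp only [encode] at h
  obtain ⟨ha, h₁⟩ := Fin.cons_injective2 h
  obtain ⟨h₂, rfl⟩ := Fin.snoc_injective2 h₁
  obtain ⟨rfl, hb⟩ := Fin.snoc_injective2 h₂
  obtain rfl := Fin.natAdd_injective 2 2 ha
  obtain rfl := Fin.natAdd_injective 2 2 hb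
  rfl

theorem labelWord_encode_injective {m : ℕ} :
    Function.Injective fun d : Fin 2 × Fin 2 × Fin 4 × (Fin m → Fin 4) =>
      labelWord (encode d) := by
  have h2 : ∀ b : Fin 2, (2 : Fin 4) ≤ Fin.natAdd 2 b := by decide
  intro d d' h
  refine encode_injective (eq_of_labelWord_eq (m := m + 1) (h2 _) ?_ h)
  have : (Fin.last (m + 1)).castSucc = (Fin.last m).castSucc.succ := rfl
  simpa [encode, this] using h2 _

end S10

def IsSingleDeletionLabelingCode {q k n : ℕ} (α : Fin k → Fin q × Fin q)
    (C : Set (Fin n → Fin q)) : Prop :=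
  ∀ x ∈ C, ∀ x' ∈ C, x ≠ x' → ∀ v : List (Fin (k + 1)),
    v ∈ delBall1 (List.ofFn (labelFun α x)) →
    v ∈ delBall1 (List.ofFn (labelFun α x')) → False

open S10 List in
theorem exists_isSingleDeletionLabelingCode_S10 (m N : ℕ)
    (hN : (m + 2) * 11 * N ≤ 4 ^ (m + 2)) :
    ∃ C : Set (Fin (m + 3) → Fin 4), C.ncard = N ∧ IsSingleDeletionLabelingCode S10 C := by
  let key (d : Fin 2 × Fin 2 × Fin 4 × (Fin m → Fin 4)) : ZMod (m + 2) × ZMod 11 :=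
    ((vtWeight (signature (labelWord (encode d))) : ZMod (m + 2)),
      (((labelWord (encode d)).map Fin.val).sum : ZMod 11))
  obtain ⟨s, hs⟩ := Fintype.exists_le_card_fiber_of_mul_le_card key (n := N) <| by
    simp only [Fintype.card_prod, ZMod.card, Fintype.card_fun, Fintype.card_fin]
    linarith [pow_add 4 m 2]
  obtain ⟨F, hF, rfl⟩ := Finset.exists_subset_card_eq hs
  refine ⟨encode '' F, by rw [Set.ncard_image_of_injective _ encode_injective,
    Set.ncard_coe_finset], ?_⟩
  rintro _ ⟨d, hd, rfl⟩ _ ⟨d', hd', rfl⟩ hne v hv hv'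
  rw [ofFn_labelFun] at hv hv'
  obtain ⟨i, j, he⟩ := exists_eraseIdx_eq_of_mem_delBall1_append_singleton hv hv'
  have hkey : key d = key d' :=
    (Finset.mem_filter.1 (hF hd)).2.trans (Finset.mem_filter.1 (hF hd')).2.symm
  simp only [key, Prod.mk.injEq, ZMod.natCast_eq_natCast_iff] at hkey
  exact hne <| congrArg encode <| labelWord_encode_injective <|
    eq_of_eraseIdx_eq_of_sum_modEq_of_vtWeight_modEq (by simp [labelWord]) hkey.2
      (by simpa [labelWord] using hkey.1) he

theorem add_clog_mul_four_pow_le (k : ℕ) :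
    (k + Nat.clog 2 k / 2 + 3) * 11 * 4 ^ k ≤ 4 ^ (k + Nat.clog 2 k / 2 + 3) := by
  set q := Nat.clog 2 k / 2
  have hk : k ≤ 2 * 4 ^ q :=
    calc k ≤ 2 ^ Nat.clog 2 k := Nat.le_pow_clog one_lt_two k
      _ ≤ 2 ^ (2 * q + 1) := Nat.pow_le_pow_right two_pos (by omega)
      _ = 2 * 4 ^ q := by rw [pow_succ, pow_mul]; ring
  have hq : q < 4 ^ q := Nat.lt_pow_self (by norm_num)
  calc (k + q + 3) * 11 * 4 ^ k ≤ (64 * 4 ^ q) * 4 ^ k := Nat.mul_le_mul_right _ (by omega)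
    _ = 4 ^ (k + q + 3) := by ring

theorem stmt6_general (k : ℕ) :
    ∃ n : ℕ, 2 * ((n : ℤ) - (k : ℤ)) ≤ (Nat.clog 2 k : ℤ) + 8 ∧
      ∃ C : Set (Fin n → Fin 4), C.ncard = 4 ^ k ∧
        ∀ x ∈ C, ∀ x' ∈ C, x ≠ x' →
          ∀ v : List (Fin 11),
            v ∈ delBall1 (List.ofFn (labelFun S10 x)) →
            v ∈ delBall1 (List.ofFn (labelFun S10 x')) → False :=
  ⟨k + Nat.clog 2 k / 2 + 1 + 3, by push_cast; omega,
    exists_isSingleDeletionLabelingCode_S10 _ _ (add_clog_mul_four_pow_le k)⟩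

/-- For the DNA label set `S10`, for every `k ≥ 2` there exist
`n` with `2(n−k) ≤ ⌈log₂ k⌉ + 8` and a code `C ⊆ Σ₄^n` with `|C| = 4^k` that is
a single-deletion `S10`-labeling code. -/
theorem stmt6 (k : ℕ) (hk : 2 ≤ k) :
    ∃ n : ℕ, 2 * ((n : ℤ) - (k : ℤ)) ≤ (Nat.clog 2 k : ℤ) + 8 ∧
      ∃ C : Set (Fin n → Fin 4), C.ncard = 4 ^ k ∧
        ∀ x ∈ C, ∀ x' ∈ C, x ≠ x' →
          ∀ v : List (Fin 11),
            v ∈ delBall1 (List.ofFn (labelFun S10 x)) →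
            v ∈ delBall1 (List.ofFn (labelFun S10 x')) → False :=
  stmt6_general k
end

section
/- Fix q ≥ 2, n ≥ 1, and boundary symbols x_0, x_{n+1} ∈ Σ_q. For x ∈ Σ_q^n, define D(x) = (x_1 − x_0, x_2 − x_1, …, x_{n+1} − x_n) ∈ Σ_q^{n+1}, with subtraction modulo q. Let C' ⊆ {d ∈ Σ_q^{n+1} : Σ_{i=1}^{n+1} d_i ≡ x_{n+1} − x_0 (mod q)} and let C = {x ∈ Σ_q^n : D(x) ∈ C'}. Then C' is a zero-deletion code if and only if C is a single-deletion labeling code for the pair-read labeling with boundary symbols x_0, x_{n+1}, i.e., for all distinct x, x' ∈ C, no sequence can be obtained from both L(x) and L(x') by deleting at most one coordinate. -/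
/-- The derivative `D(x) = (x₁−x₀, x₂−x₁, …, x_{n+1}−x_n)` of the extended word
`x₀ x x_{n+1}`, with subtraction modulo `q`. -/
def derivWord {q n : ℕ} (x0 xe : Fin q) (x : Fin n → Fin q) : Fin (n + 1) → Fin q :=
  fun i => extWord x0 xe x i.succ - extWord x0 xe x i.castSucc

/-!
Everything is read off the extended word `w = x₀ x x_{n+1}`: `L(x)` lists the adjacent pairs
of `w`, `D(x)` its adjacent differences, and a word starting with `x₀` is determined by either
list. A zero of `D(x)` is a repeated symbol `wᵢ = wᵢ₊₁`, and deleting it from `D(x)`, or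
deleting the pair `(wᵢ, wᵢ₊₁)` from `L(x)`, gives `D` resp. `L` of `w` with one copy of that
symbol removed (a stutter deletion). Conversely, if deleting pair `i` of `L(x)` and pair `j > i`
of `L(x')` leaves the same list, comparing the entries next to positions `i` and `j`, together
with the shared boundary symbols, forces `wᵢ = wᵢ₊₁` and `w'ⱼ = w'ⱼ₊₁`, while deleting the same
position forces `x = x'`. So both code conditions say that no two distinct words share a stutter
deletion; the sum condition on `C'` makes every word of `C'` some `D(x)`.
-/

namespace List

variable {α β : Type*}

def mapAdj (f : α → α → β) (w : List α) : List β :=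
  zipWith f w w.tail

def stutterDeletions (w : List α) : Set (List α) :=
  {v | ∃ i, ∃ h : i + 1 < w.length, w[i] = w[i + 1] ∧ v = w.eraseIdx i}

section mapAdj

variable (f : α → α → β)

@[simp]
lemma length_mapAdj (w : List α) : (mapAdj f w).length = w.length - 1 := by
  simp [mapAdj]

@[simp]
lemma getElem_mapAdj (w : List α) {k : ℕ} (hk : k < (mapAdj f w).length) :
    (mapAdj f w)[k] = f (w[k]'(by simp at hk; omega)) (w[k + 1]'(by simp at hk; omega)) := by
  simp [mapAdj]

lemma lt_length_eraseIdx_mapAdj {w : List α} {i : ℕ} (k : ℕ) (hk : k + 2 < w.length) :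
    k < ((mapAdj f w).eraseIdx i).length := by
  simp only [length_eraseIdx, length_mapAdj]
  split_ifs <;> omega

lemma mapAdj_ofFn {m : ℕ} (e : Fin (m + 1) → α) :
    mapAdj f (ofFn e) = ofFn fun i : Fin m => f (e i.castSucc) (e i.succ) := by
  apply ext_getElem
  · simp
  · intro k _ _
    simp only [getElem_mapAdj, List.getElem_ofFn]
    rfl

lemma mapAdj_eraseIdx {w : List α} {i : ℕ} (hi : i + 1 < w.length) (h : w[i] = w[i + 1]) :
    mapAdj f (w.eraseIdx i) = (mapAdj f w).eraseIdx i := by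
  apply ext_getElem
  · simp only [length_mapAdj, length_eraseIdx]
    split_ifs <;> omega
  · intro k _ _
    simp only [getElem_mapAdj, getElem_eraseIdx]
    by_cases hk : k + 1 < i
    · simp [hk, show k < i by omega]
    · by_cases hk' : k < i
      · obtain rfl : i = k + 1 := by omega
        simp [hk', h]
      · simp [hk, hk']

lemma eq_of_mapAdj_eq (hf : ∀ a, Function.Injective (f a)) :
    ∀ {w w' : List α}, w.head? = w'.head? → mapAdj f w = mapAdj f w' → w = w'
  | [], [], _, _ => rfl
  | a :: u, b :: u', hh, h => by
    obtain rfl : a = b := by simpa using hh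
    match u, u', h with
    | [], [], _ => rfl
    | c :: v, c' :: v', h =>
      obtain ⟨hc, hv⟩ : f a c = f a c' ∧ mapAdj f (c :: v) = mapAdj f (c' :: v') := by
        simpa [mapAdj] using h
      rw [eq_of_mapAdj_eq hf (by simpa using hf a hc) hv]
    | [], _ :: _, h => simp [mapAdj] at h
    | _ :: _, [], h => simp [mapAdj] at h

lemma eq_of_mapAdj_prod_eq {w w' : List α} (hh : w.head? = w'.head?)
    (h : mapAdj Prod.mk w = mapAdj Prod.mk w') : w = w' :=
  eq_of_mapAdj_eq _ Prod.mk_right_injective hh h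

lemma eq_of_mapAdj_sub_eq {G : Type*} [AddGroup G] {w w' : List G} (hh : w.head? = w'.head?)
    (h : mapAdj (fun a b => b - a) w = mapAdj (fun a b => b - a) w') : w = w' :=
  eq_of_mapAdj_eq _ (fun a => sub_left_injective (b := a)) hh h

lemma mapAdj_mem_delBall1_of_mem_stutterDeletions {w u : List α}
    (hu : u ∈ stutterDeletions w) : mapAdj f u ∈ delBall1 (mapAdj f w) := by
  obtain ⟨i, hi, h, rfl⟩ := hu
  exact Set.mem_insert_of_mem _ ⟨i, by simp; omega, mapAdj_eraseIdx f hi h⟩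

end mapAdj

lemma head?_of_mem_stutterDeletions {w v : List α} (hv : v ∈ stutterDeletions w) :
    v.head? = w.head? := by
  obtain ⟨i, hi, h, rfl⟩ := hv
  rcases i with _ | i
  · rw [head?_eq_getElem?, head?_eq_getElem?, getElem?_eraseIdx_of_ge (by omega),
      getElem?_pos w 1 hi, getElem?_pos w 0 (by omega), h]
  · simp [head?_eq_getElem?, getElem?_eraseIdx]

lemma getElem_eq_of_getElem?_eq {w w' : List α} {k : ℕ} (h : w[k]? = w'[k]?)
    (hk : k < w.length) (hk' : k < w'.length) : w[k] = w'[k] := by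
  rwa [getElem?_pos w k hk, getElem?_pos w' k hk', Option.some_inj] at h

lemma eq_of_eraseIdx_mapAdj_prod_eq {w w' : List α} {i : ℕ} (hlen : w.length = w'.length)
    (hhead : w.head? = w'.head?) (hlast : w.getLast? = w'.getLast?) (hi : i + 1 < w.length)
    (h : (mapAdj Prod.mk w).eraseIdx i = (mapAdj Prod.mk w').eraseIdx i) : w = w' := by
  refine ext_getElem hlen fun k hk hk' => ?_
  rcases k with _ | k
  · exact getElem_eq_of_getElem?_eq (by simpa only [head?_eq_getElem?] using hhead) hk hk'
  by_cases hki : k < i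
  · simpa [getElem_eraseIdx, hki] using
      congrArg Prod.snd (getElem_of_eq h (lt_length_eraseIdx_mapAdj _ k (by omega)))
  by_cases hkl : k + 2 < w.length
  · simpa [getElem_eraseIdx, hki] using
      congrArg Prod.fst (getElem_of_eq h (lt_length_eraseIdx_mapAdj _ k hkl))
  have hk1 : k + 1 = w.length - 1 := by omega
  rw [getLast?_eq_getElem?, getLast?_eq_getElem?, ← hlen, ← hk1] at hlast
  exact getElem_eq_of_getElem?_eq hlast hk hk'

lemma getElem_succ_eq_of_eraseIdx_mapAdj_prod_eq {w w' : List α} {i j : ℕ}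
    (hlen : w.length = w'.length) (hhead : w.head? = w'.head?)
    (hlast : w.getLast? = w'.getLast?) (hij : i < j) (hj : j + 1 < w'.length)
    (h : (mapAdj Prod.mk w).eraseIdx i = (mapAdj Prod.mk w').eraseIdx j) :
    w[i] = w[i + 1] ∧ w'[j] = w'[j + 1] := by
  have e1 : w[i + 1] = w'[i] := by
    simpa [getElem_eraseIdx, hij] using
      congrArg Prod.fst (getElem_of_eq h (lt_length_eraseIdx_mapAdj _ i (by omega)))
  have e2 : w[i] = w'[i] := by
    rcases i with _ | i
    · exact getElem_eq_of_getElem?_eq (by simpa only [head?_eq_getElem?] using hhead) _ _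
    · simpa [getElem_eraseIdx, show i < j by omega] using
        congrArg Prod.snd (getElem_of_eq h (lt_length_eraseIdx_mapAdj _ i (by omega)))
  have e3 : w[j + 1] = w'[j] := by
    obtain ⟨j, rfl⟩ : ∃ j', j = j' + 1 := ⟨j - 1, by omega⟩
    simpa [getElem_eraseIdx, show ¬ j < i by omega] using
      congrArg Prod.snd (getElem_of_eq h (lt_length_eraseIdx_mapAdj _ j (by omega)))
  have e4 : w[j + 1] = w'[j + 1] := by
    by_cases hjl : j + 2 < w.length
    · simpa [getElem_eraseIdx, show ¬ j < i by omega] using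
        congrArg Prod.fst (getElem_of_eq h (lt_length_eraseIdx_mapAdj _ j hjl))
    · have hj1 : j + 1 = w.length - 1 := by omega
      rw [getLast?_eq_getElem?, getLast?_eq_getElem?, ← hlen, ← hj1] at hlast
      exact getElem_eq_of_getElem?_eq hlast _ hj
  exact ⟨by rw [e1, e2], by rw [← e3, e4]⟩

lemma nonempty_stutterDeletions_inter_of_eraseIdx_mapAdj_prod_eq {w w' : List α} {i j : ℕ}
    (hlen : w.length = w'.length) (hhead : w.head? = w'.head?)
    (hlast : w.getLast? = w'.getLast?) (hij : i < j) (hj : j + 1 < w'.length)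
    (h : (mapAdj Prod.mk w).eraseIdx i = (mapAdj Prod.mk w').eraseIdx j) :
    (stutterDeletions w ∩ stutterDeletions w').Nonempty := by
  obtain ⟨hwi, hwj⟩ := getElem_succ_eq_of_eraseIdx_mapAdj_prod_eq hlen hhead hlast hij hj h
  have hu : w.eraseIdx i ∈ stutterDeletions w := ⟨i, by omega, hwi, rfl⟩
  have hu' : w'.eraseIdx j ∈ stutterDeletions w' := ⟨j, hj, hwj, rfl⟩
  have heq : w.eraseIdx i = w'.eraseIdx j := by
    refine eq_of_mapAdj_prod_eq ?_ ?_
    · rw [head?_of_mem_stutterDeletions hu, head?_of_mem_stutterDeletions hu', hhead]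
    · rw [mapAdj_eraseIdx _ (by omega) hwi, mapAdj_eraseIdx _ hj hwj, h]
  exact ⟨_, hu, heq ▸ hu'⟩

lemma nonempty_stutterDeletions_inter_of_mem_delBall1 {w w' : List α} (hne : w ≠ w')
    (hlen : w.length = w'.length) (hhead : w.head? = w'.head?)
    (hlast : w.getLast? = w'.getLast?) {v : List (α × α)}
    (hv : v ∈ delBall1 (mapAdj Prod.mk w)) (hv' : v ∈ delBall1 (mapAdj Prod.mk w')) :
    (stutterDeletions w ∩ stutterDeletions w').Nonempty := by
  rcases hv with rfl | ⟨i, hi, rfl⟩ <;> rcases hv' with h | ⟨j, hj, h⟩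
  · exact (hne (eq_of_mapAdj_prod_eq hhead h)).elim
  · have hl := congrArg length h
    rw [length_eraseIdx_of_lt hj] at hl
    simp only [length_mapAdj] at hj hl
    omega
  · have hl := congrArg length h
    rw [length_eraseIdx_of_lt hi] at hl
    simp only [length_mapAdj] at hi hl
    omega
  simp only [length_mapAdj] at hi hj
  rcases lt_trichotomy i j with hij | rfl | hij
  · exact nonempty_stutterDeletions_inter_of_eraseIdx_mapAdj_prod_eq hlen hhead hlast hij
      (by omega) h
  · exact (hne (eq_of_eraseIdx_mapAdj_prod_eq hlen hhead hlast (by omega) h)).elim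
  · rw [Set.inter_comm]
    exact nonempty_stutterDeletions_inter_of_eraseIdx_mapAdj_prod_eq hlen.symm hhead.symm
      hlast.symm hij (by omega) h.symm

lemma zeroDelBall_mapAdj_sub {q : ℕ} [NeZero q] (w : List (Fin q)) :
    zeroDelBall (mapAdj (fun a b => b - a) w) =
      mapAdj (fun a b => b - a) '' stutterDeletions w := by
  ext v
  constructor
  · rintro ⟨i, hi, hz, rfl⟩
    simp only [length_mapAdj] at hi
    have hwi : w[i] = w[i + 1] := (sub_eq_zero.mp (by simpa using hz)).symm
    exact ⟨_, ⟨i, by omega, hwi, rfl⟩, mapAdj_eraseIdx _ (by omega) hwi⟩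
  · rintro ⟨_, ⟨i, hi, hwi, rfl⟩, rfl⟩
    exact ⟨i, by simp; omega, by simp [hwi], mapAdj_eraseIdx _ hi hwi⟩

end List

open List

section ExtendedWord

variable {q n : ℕ} (x0 xe : Fin q)

lemma pairLabel_eq_mapAdj (x : Fin n → Fin q) :
    pairLabel x0 xe x = mapAdj Prod.mk (ofFn (extWord x0 xe x)) :=
  (mapAdj_ofFn _ _).symm

lemma ofFn_derivWord (x : Fin n → Fin q) :
    ofFn (derivWord x0 xe x) = mapAdj (fun a b => b - a) (ofFn (extWord x0 xe x)) := by
  rw [mapAdj_ofFn]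
  rfl

lemma head?_ofFn_extWord (x : Fin n → Fin q) : (ofFn (extWord x0 xe x)).head? = some x0 := by
  simp [extWord]

lemma getLast?_ofFn_extWord (x : Fin n → Fin q) :
    (ofFn (extWord x0 xe x)).getLast? = some xe := by
  rw [getLast?_eq_getElem?, List.getElem?_ofFn]
  simp [extWord, Fin.cons, Fin.snoc]

lemma ofFn_extWord_injective :
    Function.Injective fun x : Fin n → Fin q => ofFn (extWord x0 xe x) := by
  intro x x' h
  have h' : (Fin.cons x0 (Fin.snoc x xe) : Fin (n + 2) → Fin q) = Fin.cons x0 (Fin.snoc x' xe) :=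
    ofFn_injective h
  exact (Fin.snoc_inj.mp (Fin.cons_inj.mp h').2).1

lemma derivWord_injective [NeZero q] : Function.Injective (derivWord (n := n) x0 xe) := by
  intro x x' h
  refine ofFn_extWord_injective x0 xe (eq_of_mapAdj_sub_eq ?_ ?_)
  · rw [head?_ofFn_extWord, head?_ofFn_extWord]
  · rw [← ofFn_derivWord, ← ofFn_derivWord, h]

lemma exists_derivWord_eq [NeZero q] (c : Fin (n + 1) → Fin q) (hc : ∑ i, c i = xe - x0) :
    ∃ x, derivWord x0 xe x = c := by
  set e : Fin (n + 2) → Fin q := fun i => x0 + Fin.partialSum c i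
  have he : extWord x0 xe (Fin.init (Fin.tail e)) = e := by
    have hlast : Fin.tail e (Fin.last n) = xe := by
      simp only [e, Fin.tail, Fin.succ_last]
      rw [Fin.partialSum, Fin.val_last, take_of_length_le (by simp), sum_ofFn, hc]
      abel
    rw [extWord, ← hlast, Fin.snoc_init_self]
    exact (by simp [e] : Fin.cons x0 (Fin.tail e) = Fin.cons (e 0) (Fin.tail e)).trans
      (Fin.cons_self_tail e)
  refine ⟨Fin.init (Fin.tail e), funext fun i => ?_⟩
  rw [derivWord, he, ← Fin.partialSum_right_neg c i]
  simp only [e]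
  abel

end ExtendedWord

theorem stmt10_general (q n : ℕ) [NeZero q] (x0 xe : Fin q)
    (C' : Set (Fin (n + 1) → Fin q))
    (hC' : ∀ d ∈ C', ∑ i, d i = xe - x0) :
    (∀ c ∈ C', ∀ c' ∈ C', c ≠ c' →
      ∀ v, v ∈ zeroDelBall (List.ofFn c) → v ∈ zeroDelBall (List.ofFn c') → False) ↔
    (∀ x ∈ {x : Fin n → Fin q | derivWord x0 xe x ∈ C'},
      ∀ x' ∈ {x : Fin n → Fin q | derivWord x0 xe x ∈ C'}, x ≠ x' →
        ∀ v : List (Fin q × Fin q),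
          v ∈ delBall1 (pairLabel x0 xe x) → v ∈ delBall1 (pairLabel x0 xe x') → False) := by
  constructor
  · intro H x hx x' hx' hne v hv hv'
    rw [pairLabel_eq_mapAdj] at hv hv'
    obtain ⟨u, hu, hu'⟩ := nonempty_stutterDeletions_inter_of_mem_delBall1
      ((ofFn_extWord_injective x0 xe).ne hne) (by simp)
      (by rw [head?_ofFn_extWord, head?_ofFn_extWord])
      (by rw [getLast?_ofFn_extWord, getLast?_ofFn_extWord]) hv hv'
    refine H _ hx _ hx' ((derivWord_injective x0 xe).ne hne)
      (mapAdj (fun a b => b - a) u) ?_ ?_ <;>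
      rw [ofFn_derivWord, zeroDelBall_mapAdj_sub]
    exacts [⟨u, hu, rfl⟩, ⟨u, hu', rfl⟩]
  · intro H c hc c' hc' hne v hv hv'
    obtain ⟨x, rfl⟩ := exists_derivWord_eq x0 xe c (hC' c hc)
    obtain ⟨x', rfl⟩ := exists_derivWord_eq x0 xe c' (hC' c' hc')
    rw [ofFn_derivWord, zeroDelBall_mapAdj_sub] at hv hv'
    obtain ⟨u, hu, rfl⟩ := hv
    obtain ⟨u', hu', huu'⟩ := hv'
    obtain rfl : u' = u := eq_of_mapAdj_sub_eq (by
      rw [head?_of_mem_stutterDeletions hu, head?_of_mem_stutterDeletions hu',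
        head?_ofFn_extWord, head?_ofFn_extWord]) huu'
    refine H x hc x' hc' (fun h => hne (congrArg (derivWord x0 xe) h)) (mapAdj Prod.mk u') ?_ ?_ <;>
      rw [pairLabel_eq_mapAdj]
    exacts [mapAdj_mem_delBall1_of_mem_stutterDeletions _ hu,
      mapAdj_mem_delBall1_of_mem_stutterDeletions _ hu']

/-- With `C' ⊆ {d ∈ Σ_q^{n+1} : Σ dᵢ ≡ x_{n+1} − x₀ (mod q)}`
and `C = {x ∈ Σ_q^n : D(x) ∈ C'}`, the code `C'` is a zero-deletion code iff `C`
is a single-deletion labeling code for the pair-read labeling with boundary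
symbols `x₀, x_{n+1}`. -/
theorem stmt10 (q n : ℕ) [NeZero q] (hq : 2 ≤ q) (hn : 1 ≤ n) (x0 xe : Fin q)
    (C' : Set (Fin (n + 1) → Fin q))
    (hC' : ∀ d ∈ C', ∑ i, d i = xe - x0) :
    (∀ c ∈ C', ∀ c' ∈ C', c ≠ c' →
      ∀ v, v ∈ zeroDelBall (List.ofFn c) → v ∈ zeroDelBall (List.ofFn c') → False) ↔
    (∀ x ∈ {x : Fin n → Fin q | derivWord x0 xe x ∈ C'},
      ∀ x' ∈ {x : Fin n → Fin q | derivWord x0 xe x ∈ C'}, x ≠ x' →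
        ∀ v : List (Fin q × Fin q),
          v ∈ delBall1 (pairLabel x0 xe x) → v ∈ delBall1 (pairLabel x0 xe x') → False) :=
  stmt10_general q n x0 xe C' hC'
end

section
/- For all integers m ≥ 1, 0 ≤ w ≤ m, and every a ∈ {0,1,…,w}, the set S_{w,a}^{m,w+1} = {s ∈ {0,1}^m : s has Hamming weight w and Σ_{i=1}^m i·s_i ≡ a (mod w+1)} is a single zero-insertion correcting code. -/
/-- Lists obtained from `u` by inserting a single symbol `0` at some position. -/
def zeroInsBall {q : ℕ} [NeZero q] (u : List (Fin q)) : Set (List (Fin q)) :=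
  {v | ∃ i ≤ u.length, v = u.insertIdx i 0}
/-- Membership in `S_{w,a}^{m,w+1}`: binary sequences of length `m` of Hamming
weight `w` with `Σ i·sᵢ ≡ a (mod w+1)` (1-indexed positions). -/
def Scond (m w a : ℕ) (s : Fin m → Fin 2) : Prop :=
  (∑ i : Fin m, (s i : ℕ)) = w ∧ (∑ i : Fin m, ((i : ℕ) + 1) * (s i : ℕ)) % (w + 1) = a

/-!
Let `v` be obtained by inserting a zero into `s` at position `i` and into `s'` at position
`j ≥ i`. Then `s` and `s'` are both `v` with a zero deleted, so all three have weight `w`, and the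
position sums of `s'` and `s` differ by the number of ones of `v` in `[i, j)`. That number lies
in `[0, w]` and is divisible by `w + 1`, so it vanishes: `v` is zero on `[i, j]`, and deleting
either zero gives the same sequence.
-/

open Finset

theorem List.insertIdx_ofFn {α : Type*} {n : ℕ} (f : Fin n → α) (x : α) {i : ℕ}
    (hi : i ≤ n) :
    (List.ofFn f).insertIdx i x = List.ofFn (Fin.insertNth ⟨i, Nat.lt_succ_of_le hi⟩ x f) := by
  set I : Fin (n + 1) := ⟨i, Nat.lt_succ_of_le hi⟩
  refine List.ext_getElem (by simp [List.length_insertIdx_of_le_length, hi]) fun p hp _ => ?_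
  obtain ⟨q, rfl⟩ : ∃ q : Fin (n + 1), (q : ℕ) = p := ⟨⟨p, by simp_all⟩, rfl⟩
  rw [List.getElem_ofFn]
  rcases Fin.eq_self_or_eq_succAbove I q with rfl | ⟨k, rfl⟩
  · rw [Fin.insertNth_apply_same, List.getElem_insertIdx_self]
  rw [Fin.insertNth_apply_succAbove]
  rcases Fin.castSucc_lt_or_lt_succ I k with h | h
  · simp only [Fin.succAbove_of_castSucc_lt _ _ h, Fin.val_castSucc]
    rw [List.getElem_insertIdx_of_lt (show (k : ℕ) < i from h), List.getElem_ofFn]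
  · simp only [Fin.succAbove_of_lt_succ _ _ h, Fin.val_succ]
    rw [List.getElem_insertIdx_of_gt (show i < (k : ℕ) + 1 from h)]
    simp

theorem Finset.sum_Iio_add_sum_Ico {α M : Type*} [LinearOrder α] [LocallyFiniteOrder α]
    [OrderBot α] [AddCommMonoid M] (f : α → M) {a b : α} (hab : a ≤ b) :
    ∑ x ∈ Iio a, f x + ∑ x ∈ Ico a b, f x = ∑ x ∈ Iio b, f x := by
  rw [← Finset.Ico_bot, ← Finset.Ico_bot, ← sum_union (Ico_disjoint_Ico_consecutive _ _ _),
    Ico_union_Ico_eq_Ico bot_le hab]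

namespace Fin

theorem sum_comp_succAbove_of_eq_zero {M : Type*} [AddCommMonoid M] {n : ℕ}
    (f : Fin (n + 1) → M) {i : Fin (n + 1)} (hi : f i = 0) :
    ∑ k, f (i.succAbove k) = ∑ p, f p := by
  rw [sum_univ_succAbove f i, hi, zero_add]

theorem sum_succ_mul_comp_succAbove_of_eq_zero {n : ℕ} (f : Fin (n + 1) → ℕ)
    {i : Fin (n + 1)} (hi : f i = 0) :
    ∑ k : Fin n, ((k : ℕ) + 1) * f (i.succAbove k) =
      ∑ p : Fin (n + 1), (p : ℕ) * f p + ∑ p ∈ Iio i, f p := by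
  rw [← filter_gt_eq_Iio, sum_filter, ← sum_add_distrib, sum_univ_succAbove _ i, hi]
  simp only [mul_zero, ite_self, add_zero, zero_add]
  refine sum_congr rfl fun k _ => ?_
  rcases lt_or_ge k.castSucc i with h | h
  · rw [succAbove_of_castSucc_lt _ _ h, if_pos h, val_castSucc]
    ring
  · rw [succAbove_of_le_castSucc _ _ h, if_neg (not_lt.2 (h.trans (castSucc_le_succ k))),
      val_succ, add_zero]

theorem sum_succ_mul_comp_succAbove_eq_add {n : ℕ} (f : Fin (n + 1) → ℕ) {i j : Fin (n + 1)}
    (hij : i ≤ j) (hi : f i = 0) (hj : f j = 0) :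
    ∑ k : Fin n, ((k : ℕ) + 1) * f (j.succAbove k) =
      ∑ k : Fin n, ((k : ℕ) + 1) * f (i.succAbove k) + ∑ p ∈ Ico i j, f p := by
  rw [sum_succ_mul_comp_succAbove_of_eq_zero f hi, sum_succ_mul_comp_succAbove_of_eq_zero f hj,
    add_assoc, sum_Iio_add_sum_Ico f hij]

theorem comp_succAbove_eq_of_forall_Icc {α : Type*} {n : ℕ} {V : Fin (n + 1) → α}
    {i j : Fin (n + 1)} {c : α} (hij : i ≤ j) (h : ∀ p ∈ Icc i j, V p = c) :
    V ∘ i.succAbove = V ∘ j.succAbove := by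
  funext k
  simp only [Function.comp_apply]
  by_cases hki : k.castSucc < i
  · rw [succAbove_of_castSucc_lt _ _ hki, succAbove_of_castSucc_lt _ _ (hki.trans_le hij)]
  have hik : i ≤ k.castSucc := not_lt.1 hki
  by_cases hkj : k.castSucc < j
  · rw [succAbove_of_le_castSucc _ _ hik, succAbove_of_castSucc_lt _ _ hkj,
      h _ (mem_Icc.2 ⟨hik.trans (castSucc_le_succ k), castSucc_lt_iff_succ_le.1 hkj⟩),
      h _ (mem_Icc.2 ⟨hik, hkj.le⟩)]
  · rw [succAbove_of_le_castSucc _ _ hik, succAbove_of_le_castSucc _ _ (not_lt.1 hkj)]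

end Fin

theorem comp_succAbove_eq_of_scond {m w a : ℕ} {V : Fin (m + 1) → Fin 2} {i j : Fin (m + 1)}
    (hi : V i = 0) (hj : V j = 0) (hs : Scond m w a (V ∘ i.succAbove))
    (hs' : Scond m w a (V ∘ j.succAbove)) : V ∘ i.succAbove = V ∘ j.succAbove := by
  wlog hij : i ≤ j generalizing i j
  · exact (this hj hi hs' hs (le_of_not_ge hij)).symm
  set f : Fin (m + 1) → ℕ := fun p => V p
  have hfi : f i = 0 := by simp [f, hi]
  have hfj : f j = 0 := by simp [f, hj]
  have hweight : ∑ p, f p = w := by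
    rw [← Fin.sum_comp_succAbove_of_eq_zero f hfi, ← hs.1]
    rfl
  have hmoment : ∑ k : Fin m, ((k : ℕ) + 1) * f (i.succAbove k) ≡
      ∑ k : Fin m, ((k : ℕ) + 1) * f (i.succAbove k) + ∑ p ∈ Ico i j, f p [MOD w + 1] := by
    rw [← Fin.sum_succ_mul_comp_succAbove_eq_add f hij hfi hfj]
    exact hs.2.trans hs'.2.symm
  have hgap : ∑ p ∈ Ico i j, f p = 0 := by
    refine Nat.eq_zero_of_dvd_of_lt (a := w + 1) ?_ (Nat.lt_succ_of_le ?_)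
    · simpa using (Nat.modEq_iff_dvd' le_self_add).1 hmoment
    · exact hweight ▸ sum_le_sum_of_subset (subset_univ _)
  refine Fin.comp_succAbove_eq_of_forall_Icc (c := 0) hij fun p hp => ?_
  rcases eq_or_ne p j with rfl | hpj
  · exact hj
  · obtain ⟨hip, hpj'⟩ := mem_Icc.1 hp
    have hfp : f p = 0 := sum_eq_zero_iff.1 hgap p (mem_Ico.2 ⟨hip, lt_of_le_of_ne hpj' hpj⟩)
    exact Fin.ext (by simpa [f] using hfp)

theorem stmt11_general (m w a : ℕ)
    (s s' : Fin m → Fin 2) (hs : Scond m w a s) (hs' : Scond m w a s') (hne : s ≠ s') :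
    ∀ v : List (Fin 2),
      v ∈ zeroInsBall (List.ofFn s) → v ∈ zeroInsBall (List.ofFn s') → False := by
  rintro v ⟨i, hi, rfl⟩ ⟨j, hj, hv⟩
  rw [List.length_ofFn] at hi hj
  rw [List.insertIdx_ofFn s 0 hi, List.insertIdx_ofFn s' 0 hj, List.ofFn_inj] at hv
  set I : Fin (m + 1) := ⟨i, Nat.lt_succ_of_le hi⟩
  set J : Fin (m + 1) := ⟨j, Nat.lt_succ_of_le hj⟩
  set V : Fin (m + 1) → Fin 2 := I.insertNth 0 s
  have hVs : V ∘ I.succAbove = s := Fin.insertNth_comp_succAbove I 0 s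
  have hVs' : V ∘ J.succAbove = s' := by rw [hv, Fin.insertNth_comp_succAbove]
  have hVI : V I = 0 := Fin.insertNth_apply_same _ _ _
  have hVJ : V J = 0 := by rw [hv, Fin.insertNth_apply_same]
  exact hne (hVs.symm.trans
    ((comp_succAbove_eq_of_scond hVI hVJ (hVs ▸ hs) (hVs' ▸ hs')).trans hVs'))

/-- For all `m ≥ 1`, `0 ≤ w ≤ m` and `a ∈ {0,…,w}`, the set
`S_{w,a}^{m,w+1}` is a single zero-insertion correcting code. -/
theorem stmt11 (m w a : ℕ) (hm : 1 ≤ m) (hw : w ≤ m) (ha : a ≤ w)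
    (s s' : Fin m → Fin 2) (hs : Scond m w a s) (hs' : Scond m w a s') (hne : s ≠ s') :
    ∀ v : List (Fin 2),
      v ∈ zeroInsBall (List.ofFn s) → v ∈ zeroInsBall (List.ofFn s') → False :=
  stmt11_general m w a s s' hs hs' hne
end

section
/- Fix integers q ≥ 2, m ≥ 1, 0 ≤ w ≤ m, and a ∈ {0,1,…,w}. The set T_{w,a}^{m,w+1} = {t ∈ Σ_q^m : the support indicator vector (1_{t_1 ≠ 0}, …, 1_{t_m ≠ 0}) lies in S_{w,a}^{m,w+1}} is a single zero-insertion correcting code over Σ_q. -/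
namespace List

variable {α : Type*} [Zero α] [DecidableEq α]

def supportWeight (l : List α) : ℕ := l.countP (· ≠ 0)

-- Counting each suffix once gives `∑ k, (k + 1) * [l[k] ≠ 0]`: entry `k` lies in `k + 1` suffixes.
def supportMoment (l : List α) : ℕ := (l.tails.map supportWeight).sum

@[simp]
lemma supportWeight_nil : supportWeight ([] : List α) = 0 := rfl

@[simp]
lemma supportWeight_cons (x : α) (l : List α) :
    supportWeight (x :: l) = supportWeight l + if x = 0 then 0 else 1 := by
  simp [supportWeight, countP_cons]

@[simp]
lemma supportMoment_nil : supportMoment ([] : List α) = 0 := by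
  simp [supportMoment, supportWeight]

lemma supportMoment_cons (x : α) (l : List α) :
    supportMoment (x :: l) = supportWeight (x :: l) + supportMoment l := by
  simp [supportMoment]

lemma supportWeight_drop_le (l : List α) (i : ℕ) : supportWeight (l.drop i) ≤ supportWeight l :=
  (drop_sublist i l).countP_le

@[simp]
lemma supportWeight_insertIdx_zero (l : List α) (i : ℕ) :
    supportWeight (l.insertIdx i 0) = supportWeight l := by
  induction l generalizing i with
  | nil => cases i <;> simp
  | cons x l ih => cases i <;> simp [ih]

lemma supportMoment_insertIdx_zero (l : List α) (i : ℕ) :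
    supportMoment (l.insertIdx i 0) = supportMoment l + supportWeight (l.drop i) := by
  induction l generalizing i with
  | nil => cases i <;> simp [supportMoment_cons]
  | cons x l ih =>
    cases i with
    | zero => simp [supportMoment_cons, add_comm]
    | succ i =>
      simp only [insertIdx_succ_cons, supportMoment_cons, supportWeight_cons,
        supportWeight_insertIdx_zero, ih, drop_succ_cons]
      omega

lemma insertIdx_zero_eq_cons {l : List α} {j : ℕ} (hj : j ≤ l.length)
    (h : supportWeight (l.drop j) = supportWeight l) : l.insertIdx j 0 = 0 :: l := by
  induction l generalizing j with
  | nil => simp_all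
  | cons x l ih =>
    cases j with
    | zero => rfl
    | succ j =>
      have hle := supportWeight_drop_le l j
      simp only [drop_succ_cons, supportWeight_cons] at h
      have hx : x = 0 := by by_contra hx; simp [hx] at h; omega
      subst hx
      simp only [insertIdx_succ_cons, ih (by simpa using hj) (by simpa using h)]

lemma eq_of_insertIdx_zero_eq_of_supportWeight_drop_eq {l l' : List α} {i j : ℕ} (hij : i ≤ j)
    (hj : j ≤ l'.length) (h : l.insertIdx i 0 = l'.insertIdx j 0)
    (hw : supportWeight (l.drop i) = supportWeight (l'.drop j)) : l = l' := by
  induction i generalizing l l' j with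
  | zero =>
    have hl : supportWeight l = supportWeight l' := by
      simpa using congrArg supportWeight h
    rw [insertIdx_zero, insertIdx_zero_eq_cons hj (by simpa [hl] using hw.symm)] at h
    exact (cons_inj_right 0).mp h
  | succ i ih =>
    obtain ⟨j, rfl⟩ : ∃ j', j = j' + 1 := ⟨j - 1, by omega⟩
    obtain ⟨y, l', rfl⟩ := exists_cons_of_length_pos (by omega : 0 < l'.length)
    cases l with
    | nil => simp at h
    | cons x l =>
      simp only [insertIdx_succ_cons, cons.injEq] at h
      simp only [drop_succ_cons] at hw
      rw [h.1, ih (by omega) (by simpa using hj) h.2 hw]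

lemma eq_of_insertIdx_zero_eq_of_modEq {w : ℕ} {l l' : List α} {i j : ℕ}
    (hl : supportWeight l = w) (hl' : supportWeight l' = w)
    (hmod : supportMoment l ≡ supportMoment l' [MOD w + 1])
    (hi : i ≤ l.length) (hj : j ≤ l'.length) (h : l.insertIdx i 0 = l'.insertIdx j 0) :
    l = l' := by
  wlog hij : i ≤ j generalizing l l' i j
  · exact (this hl' hl hmod.symm hj hi h.symm (by omega)).symm
  have hmoment := congrArg supportMoment h
  rw [supportMoment_insertIdx_zero, supportMoment_insertIdx_zero] at hmoment
  have hdrop : supportWeight (l.drop i) ≡ supportWeight (l'.drop j) [MOD w + 1] :=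
    Nat.ModEq.add_left_cancel hmod (hmoment ▸ rfl)
  refine eq_of_insertIdx_zero_eq_of_supportWeight_drop_eq hij hj h (hdrop.eq_of_lt_of_lt ?_ ?_)
  · exact Nat.lt_succ_of_le (hl ▸ supportWeight_drop_le l i)
  · exact Nat.lt_succ_of_le (hl' ▸ supportWeight_drop_le l' j)

end List

section

variable {α : Type*} [Zero α] [DecidableEq α]

lemma supportWeight_ofFn {m : ℕ} (t : Fin m → α) :
    (List.ofFn t).supportWeight = ∑ i, (((if t i = 0 then 0 else 1 : Fin 2)) : ℕ) := by
  induction m with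
  | zero => simp
  | succ m ih =>
    rw [List.ofFn_succ, Fin.sum_univ_succ, List.supportWeight_cons, ih, add_comm]
    split <;> rfl

lemma supportMoment_ofFn {m : ℕ} (t : Fin m → α) :
    (List.ofFn t).supportMoment =
      ∑ i : Fin m, ((i : ℕ) + 1) * (((if t i = 0 then 0 else 1 : Fin 2)) : ℕ) := by
  induction m with
  | zero => simp
  | succ m ih =>
    rw [List.ofFn_succ, List.supportMoment_cons, ← List.ofFn_succ, supportWeight_ofFn, ih]
    simp only [Fin.sum_univ_succ, Fin.val_succ, Fin.val_zero, add_mul, Finset.sum_add_distrib,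
      one_mul, zero_mul]
    ring

lemma scond_iff_support {m w a : ℕ} (t : Fin m → α) :
    Scond m w a (fun i => if t i = 0 then 0 else 1) ↔
      (List.ofFn t).supportWeight = w ∧ (List.ofFn t).supportMoment % (w + 1) = a := by
  simp only [Scond, supportWeight_ofFn, supportMoment_ofFn]

end

theorem stmt13_general (q m w a : ℕ) [NeZero q]
    (t t' : Fin m → Fin q)
    (ht : Scond m w a (fun i => if t i = 0 then 0 else 1))
    (ht' : Scond m w a (fun i => if t' i = 0 then 0 else 1))
    (hne : t ≠ t') :
    ∀ v : List (Fin q),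
      v ∈ zeroInsBall (List.ofFn t) → v ∈ zeroInsBall (List.ofFn t') → False := by
  rintro v ⟨i, hi, rfl⟩ ⟨j, hj, h⟩
  rw [scond_iff_support] at ht ht'
  exact hne <| List.ofFn_injective <| List.eq_of_insertIdx_zero_eq_of_modEq ht.1 ht'.1
    (ht.2.trans ht'.2.symm) hi hj h

/-- The set `T_{w,a}^{m,w+1}` of sequences over `Σ_q` whose
support indicator vector lies in `S_{w,a}^{m,w+1}` is a single zero-insertion
correcting code over `Σ_q`. -/
theorem stmt13 (q m w a : ℕ) [NeZero q] (hq : 2 ≤ q) (hm : 1 ≤ m) (hw : w ≤ m) (ha : a ≤ w)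
    (t t' : Fin m → Fin q)
    (ht : Scond m w a (fun i => if t i = 0 then 0 else 1))
    (ht' : Scond m w a (fun i => if t' i = 0 then 0 else 1))
    (hne : t ≠ t') :
    ∀ v : List (Fin q),
      v ∈ zeroInsBall (List.ofFn t) → v ∈ zeroInsBall (List.ofFn t') → False :=
  stmt13_general q m w a t t' ht ht' hne
end

section
/- For all integers q ≥ 2 and m ≥ 1 there exists a single zero-insertion correcting code C' ⊆ Σ_q^m with |C'| ≥ q^{m+1} / ((q−1)(m+1)). -/
open Finset

theorem sum_choose_mul_pow_div_mul {K : Type*} [Field K] [CharZero K] (x : K) (m : ℕ) :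
    (∑ t ∈ range (m + 1), (m.choose t : K) * x ^ t / (t + 1)) * (x * (m + 1)) =
      (x + 1) ^ (m + 1) - 1 := by
  have hterm : ∀ t ∈ range (m + 1), (m.choose t : K) * x ^ t / (t + 1) * (x * (m + 1)) =
      x ^ (t + 1) * ((m + 1).choose (t + 1) : ℕ) := by
    intro t _
    have h : ((m + 1 : ℕ) : K) * m.choose t = ((m + 1).choose (t + 1) : ℕ) * ((t + 1 : ℕ) : K) := by
      exact_mod_cast Nat.add_one_mul_choose_eq m t
    push_cast at h
    field_simp
    linear_combination x ^ (t + 1) * h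
  rw [sum_mul, sum_congr rfl hterm, add_pow, sum_range_succ' _ (m + 1)]
  simp

theorem pow_succ_div_le_pow_add_sum_choose {y : ℝ} {m : ℕ} (hy : 2 ≤ y) (hm : 1 ≤ m) :
    y ^ (m + 1) / ((y - 1) * (m + 1)) ≤
      (y - 1) ^ m + ∑ t ∈ range m, (m.choose t : ℝ) * (y - 1) ^ t / (t + 1) := by
  obtain ⟨x, rfl⟩ : ∃ x, y = x + 1 := ⟨y - 1, by ring⟩
  have hx : 1 ≤ x := by linarith
  have hsum := sum_choose_mul_pow_div_mul x m
  rw [sum_range_succ, Nat.choose_self, Nat.cast_one, one_mul] at hsum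
  have hmx : (1 : ℝ) ≤ m * x ^ (m + 1) :=
    one_le_mul_of_one_le_of_one_le (by exact_mod_cast hm) (one_le_pow₀ hx)
  rw [add_sub_cancel_right, div_le_iff₀ (by positivity)]
  have hm1 : (m : ℝ) + 1 ≠ 0 := by positivity
  calc (x + 1) ^ (m + 1) ≤ (x + 1) ^ (m + 1) - 1 + m * x ^ (m + 1) := by linarith
    _ = _ := by rw [← hsum]; field_simp; ring

theorem exists_card_div_le_card_filter_mod_eq {β : Type*} (s : Finset β) (f : β → ℕ) (n : ℕ) :
    ∃ a, (#s : ℝ) / (n + 1) ≤ #{x ∈ s | f x % (n + 1) = a} := by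
  obtain ⟨a, -, ha⟩ := exists_le_card_fiber_of_nsmul_le_card_of_maps_to
    (f := fun x => f x % (n + 1)) (t := range (n + 1)) (b := (#s : ℝ) / (n + 1))
    (fun x _ => mem_range.2 (Nat.mod_lt _ n.succ_pos)) nonempty_range_add_one
    (by rw [card_range, nsmul_eq_mul]; push_cast; rw [mul_div_cancel₀ _ (by positivity)])
  exact ⟨a, ha⟩

section

variable {ι α : Type*} [Fintype ι] [DecidableEq ι] [Fintype α] [DecidableEq α] [Zero α]

theorem card_filter_support_eq (s : Finset ι) :
    #{c : ι → α | ({i | c i ≠ 0} : Finset ι) = s} = (Fintype.card α - 1) ^ #s := by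
  have hpi : ({c : ι → α | ({i | c i ≠ 0} : Finset ι) = s} : Finset (ι → α)) =
      Fintype.piFinset fun i => if i ∈ s then univ.erase 0 else {0} := by
    ext c
    simp only [mem_filter, mem_univ, true_and, Fintype.mem_piFinset, Finset.ext_iff]
    refine forall_congr' fun i => ?_
    split_ifs with hi <;> simp [hi]
  rw [hpi, Fintype.card_piFinset]
  simp [apply_ite, card_erase_of_mem, prod_ite_mem]

theorem card_filter_hammingNorm_eq (t : ℕ) :
    #{c : ι → α | hammingNorm c = t} = (Fintype.card ι).choose t * (Fintype.card α - 1) ^ t := by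
  rw [card_eq_sum_card_fiberwise (f := fun c : ι → α => ({i | c i ≠ 0} : Finset ι))
    (t := powersetCard t univ) (fun c hc => by simpa [hammingNorm] using hc)]
  rw [sum_congr rfl fun s hs => ?_, sum_const, card_powersetCard, card_univ, smul_eq_mul]
  rw [mem_powersetCard] at hs
  rw [filter_filter, ← hs.2, ← card_filter_support_eq s]
  congr 1
  ext c
  simp only [mem_filter, mem_univ, true_and, hammingNorm]
  exact ⟨And.right, fun h => ⟨by rw [h, hs.2], h⟩⟩

end

theorem List.countP_ofFn {α : Type*} {m : ℕ} (c : Fin m → α) (p : α → Bool) :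
    (List.ofFn c).countP p = #{i | p (c i)} := by
  induction m with
  | zero => simp
  | succ m ih =>
    rw [List.ofFn_succ, List.countP_cons, ih, card_filter, card_filter, Fin.sum_univ_succ]
    split_ifs <;> omega

theorem List.eraseIdx_eq_eraseIdx_of_getElem?_eq {α : Type*} {l : List α} {i j : ℕ} (hij : i ≤ j)
    (h : ∀ p, i ≤ p → p < j → l[p]? = l[p + 1]?) : l.eraseIdx i = l.eraseIdx j := by
  refine List.ext_getElem? fun p => ?_
  simp only [List.getElem?_eraseIdx]
  split_ifs with h₁ h₂ h₂
  · rfl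
  · omega
  · exact (h p (by omega) h₂).symm
  · rfl

namespace ZeroInsertion

variable {α : Type*} [Zero α]

lemma zero_mem_of_insertIdx_eq {l l' : List α} {i j : ℕ} (hi : i ≤ l.length) (hij : i < j)
    (heq : l.insertIdx i 0 = l'.insertIdx j 0) : (0 : α) ∈ l' := by
  have h := List.getElem?_insertIdx_of_lt (l := l') (x := (0 : α)) hij
  rw [← heq, List.getElem?_insertIdx_self, if_pos hi] at h
  exact List.mem_of_getElem? h.symm

variable [DecidableEq α]

def weight (l : List α) : ℕ := l.countP (· ≠ 0)

def moment : List α → ℕ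
  | [] => 0
  | a :: l => moment l + if a = 0 then 0 else l.length + 1

lemma weight_insertIdx_zero {l : List α} {i : ℕ} (hi : i ≤ l.length) :
    weight (l.insertIdx i 0) = weight l := by
  simp [weight, (List.perm_insertIdx 0 l hi).countP_eq]

lemma weight_take_mono (l : List α) {i j : ℕ} (hij : i ≤ j) :
    weight (l.take i) ≤ weight (l.take j) :=
  (List.take_sublist_take_left hij).countP_le

lemma weight_take_le (l : List α) (i : ℕ) : weight (l.take i) ≤ weight l :=
  (List.take_sublist i l).countP_le

lemma weight_lt_length_of_zero_mem {l : List α} (h : (0 : α) ∈ l) : weight l < l.length := by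
  refine lt_of_le_of_ne List.countP_le_length fun heq => ?_
  simpa using List.countP_eq_length.1 heq 0 h

lemma moment_insertIdx_zero {l : List α} {i : ℕ} (hi : i ≤ l.length) :
    moment (l.insertIdx i 0) = moment l + weight (l.take i) := by
  induction l generalizing i with
  | nil => simp_all [moment, weight]
  | cons a l ih =>
    cases i with
    | zero => simp [moment, weight]
    | succ i =>
      have hi : i ≤ l.length := by simpa using hi
      simp only [List.insertIdx_succ_cons, moment, ih hi, List.length_insertIdx_of_le_length hi,
        List.take_succ_cons, weight, List.countP_cons]
      split_ifs <;> simp_all; omega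

lemma getElem_eq_zero_of_weight_take_eq {v : List α} {i j p : ℕ}
    (hij : weight (v.take i) = weight (v.take j)) (hip : i ≤ p) (hpj : p < j) (hp : p < v.length) :
    v[p] = 0 := by
  have hsucc : weight (v.take (p + 1)) = weight (v.take p) + if v[p] = 0 then 0 else 1 := by
    rw [weight, List.take_add_one, List.getElem?_eq_getElem hp, List.countP_append]
    by_cases h : v[p] = 0 <;> simp [weight, h]
  have := weight_take_mono v hip
  have := weight_take_mono v (show p + 1 ≤ j by omega)
  by_contra h
  simp only [h, if_false] at hsucc
  omega

lemma not_modEq_moment_of_insertIdx_eq {l l' : List α} {i j : ℕ} (hi : i ≤ l.length)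
    (hj : j ≤ l'.length) (hij : i < j) (heq : l.insertIdx i 0 = l'.insertIdx j 0) (hne : l ≠ l') :
    ¬ moment l ≡ moment l' [MOD weight l + 1] := by
  set v := l.insertIdx i 0
  have hvlen : v.length = l'.length + 1 := by rw [heq, List.length_insertIdx_of_le_length hj]
  have hmi : moment v = moment l + weight (v.take i) := by
    rw [moment_insertIdx_zero hi, List.take_insertIdx_eq_take_of_le _ _ _ _ le_rfl]
  have hmj : moment v = moment l' + weight (v.take j) := by
    rw [heq, moment_insertIdx_zero hj, List.take_insertIdx_eq_take_of_le _ _ _ _ le_rfl]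
  have hwv : weight v = weight l := weight_insertIdx_zero hi
  have hlt : weight (v.take i) < weight (v.take j) := by
    refine lt_of_le_of_ne (weight_take_mono v hij.le) fun hw => hne ?_
    -- then `v` vanishes on `[i, j]`, so erasing the `0` at `i` or the one at `j` gives the same list
    have hzero : ∀ p, i ≤ p → p ≤ j → v[p]? = some 0 := by
      intro p hip hpj
      rcases hpj.lt_or_eq with hpj | rfl
      · rw [List.getElem?_eq_getElem (by omega),
          getElem_eq_zero_of_weight_take_eq hw hip hpj (by omega)]
      · rw [heq, List.getElem?_insertIdx_self, if_pos hj]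
    rw [← List.eraseIdx_insertIdx_self (i := i) (l := l) 0,
      ← List.eraseIdx_insertIdx_self (i := j) (l := l') 0, ← heq]
    exact List.eraseIdx_eq_eraseIdx_of_getElem?_eq hij.le fun p hip hpj => by
      rw [hzero p hip hpj.le, hzero (p + 1) (by omega) hpj]
  have hwj := weight_take_le v j
  intro hmod
  have hdvd := (Nat.modEq_iff_dvd' (by omega)).1 hmod.symm
  have := Nat.le_of_dvd (by omega) hdvd
  omega

lemma weight_eq_and_not_modEq_of_mem_zeroInsBall {q : ℕ} [NeZero q] {l l' v : List (Fin q)}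
    (hne : l ≠ l') (hv : v ∈ zeroInsBall l) (hv' : v ∈ zeroInsBall l') :
    weight l = weight l' ∧ weight l < l.length ∧ ¬ moment l ≡ moment l' [MOD weight l + 1] := by
  obtain ⟨i, hi, rfl⟩ := hv
  obtain ⟨j, hj, heq⟩ := hv'
  have hlen : l.length = l'.length := by
    simpa [List.length_insertIdx_of_le_length, hi, hj] using congrArg List.length heq
  have hw : weight l = weight l' := by
    rw [← weight_insertIdx_zero hi, heq, weight_insertIdx_zero hj]
  rcases lt_trichotomy i j with hij | rfl | hij
  · refine ⟨hw, ?_, not_modEq_moment_of_insertIdx_eq hi hj hij heq hne⟩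
    rw [hw, hlen]
    exact weight_lt_length_of_zero_mem (zero_mem_of_insertIdx_eq hi hij heq)
  · exact absurd (List.insertIdx_injective i 0 heq) hne
  · refine ⟨hw, weight_lt_length_of_zero_mem (zero_mem_of_insertIdx_eq hj hij heq.symm), ?_⟩
    rw [hw]
    exact fun h => not_modEq_moment_of_insertIdx_eq hj hi hij heq.symm hne.symm h.symm

lemma weight_ofFn {m : ℕ} (c : Fin m → α) : weight (List.ofFn c) = hammingNorm c := by
  simp [weight, List.countP_ofFn, hammingNorm]

section Code

variable [Fintype α]

variable (α) in
def code (m : ℕ) (A : ℕ → ℕ) : Finset (Fin m → α) :=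
  {c | hammingNorm c < m → moment (List.ofFn c) % (hammingNorm c + 1) = A (hammingNorm c)}

lemma disjoint_zeroInsBall_of_mem_code {q m : ℕ} [NeZero q] {A : ℕ → ℕ} {c c' : Fin m → Fin q}
    (hc : c ∈ code (Fin q) m A) (hc' : c' ∈ code (Fin q) m A) (hne : c ≠ c') :
    Disjoint (zeroInsBall (List.ofFn c)) (zeroInsBall (List.ofFn c')) := by
  refine Set.disjoint_left.2 fun v hv hv' => ?_
  obtain ⟨hw, hlt, hmod⟩ :=
    weight_eq_and_not_modEq_of_mem_zeroInsBall (List.ofFn_injective.ne hne) hv hv'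
  simp only [weight_ofFn, List.length_ofFn] at hw hlt hmod
  simp only [code, mem_filter, mem_univ, true_and] at hc hc'
  rw [← hw] at hc'
  exact hmod ((hc hlt).trans (hc' hlt).symm)

lemma le_card_code {m : ℕ} {A : ℕ → ℕ}
    (hA : ∀ t, (#{c : Fin m → α | hammingNorm c = t} : ℝ) / (t + 1) ≤
      #{c ∈ {c : Fin m → α | hammingNorm c = t} | moment (List.ofFn c) % (t + 1) = A t}) :
    ((Fintype.card α : ℝ) - 1) ^ m +
        ∑ t ∈ range m, (m.choose t : ℝ) * ((Fintype.card α : ℝ) - 1) ^ t / (t + 1) ≤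
      #(code α m A) := by
  have hcard : ∀ t, (#{c : Fin m → α | hammingNorm c = t} : ℝ) =
      m.choose t * ((Fintype.card α : ℝ) - 1) ^ t := by
    intro t
    rw [card_filter_hammingNorm_eq, Fintype.card_fin, Nat.cast_mul, Nat.cast_pow,
      Nat.cast_sub Fintype.card_pos, Nat.cast_one]
  have hfib := card_eq_sum_card_fiberwise (s := code α m A) (t := range (m + 1))
    (f := fun c : Fin m → α => hammingNorm c) fun c _ => mem_range.2 (Nat.lt_succ_of_le (by
      simpa using hammingNorm_le_card_fintype (x := c)))
  rw [hfib, sum_range_succ, Nat.cast_add, Nat.cast_sum, add_comm]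
  gcongr with t ht
  · have hfiber : ({c ∈ code α m A | hammingNorm c = t} : Finset (Fin m → α)) =
        {c ∈ ({c | hammingNorm c = t} : Finset (Fin m → α)) |
          moment (List.ofFn c) % (t + 1) = A t} := by
      ext c
      simp only [code, mem_filter, mem_univ, true_and]
      exact ⟨fun ⟨h, hc⟩ => ⟨hc, hc ▸ h (hc ▸ mem_range.1 ht)⟩, fun ⟨hc, h⟩ => ⟨fun _ => hc ▸ h, hc⟩⟩
    rw [hfiber, ← hcard]
    exact hA t
  · have hfiber : ({c ∈ code α m A | hammingNorm c = m} : Finset (Fin m → α)) =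
        ({c | hammingNorm c = m} : Finset (Fin m → α)) := by
      ext c
      simp only [code, mem_filter, mem_univ, true_and, and_iff_right_iff_imp]
      intro hc h
      omega
    rw [hfiber, hcard, Nat.choose_self, Nat.cast_one, one_mul]

end Code

end ZeroInsertion

open ZeroInsertion in
/-- For all `q ≥ 2` and `m ≥ 1` there exists a single
zero-insertion correcting code `C' ⊆ Σ_q^m` with `|C'| ≥ q^{m+1}/((q−1)(m+1))`. -/
theorem stmt14 (q m : ℕ) [NeZero q] (hq : 2 ≤ q) (hm : 1 ≤ m) :
    ∃ C : Set (Fin m → Fin q),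
      (q : ℝ) ^ (m + 1) / (((q : ℝ) - 1) * ((m : ℝ) + 1)) ≤ (C.ncard : ℝ) ∧
      ∀ c ∈ C, ∀ c' ∈ C, c ≠ c' →
        ∀ v : List (Fin q),
          v ∈ zeroInsBall (List.ofFn c) → v ∈ zeroInsBall (List.ofFn c') → False := by
  choose A hA using fun t => exists_card_div_le_card_filter_mod_eq
    {c : Fin m → Fin q | hammingNorm c = t} (fun c => moment (List.ofFn c)) t
  refine ⟨code (Fin q) m A, ?_, ?_⟩
  · rw [Set.ncard_coe_finset]
    calc _ ≤ _ := pow_succ_div_le_pow_add_sum_choose (by exact_mod_cast hq) hm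
      _ ≤ _ := by simpa using le_card_code hA
  · exact fun c hc c' hc' hne _ hv hv' =>
      Set.disjoint_left.1 (disjoint_zeroInsBall_of_mem_code hc hc' hne) hv hv'
end

section
/- For every integer m ≥ 3, Σ_{z=1}^{⌊m/2⌋} binom(m, 2z)/z ≤ 2^{m+2}/(m−2). -/
/-!
Pascal's rule `(n + 1) · C(n, 2z) = (2z + 1) · C(n + 1, 2z + 1)` trades the weight `1 / z` for
`(2z + 1) / z ≤ 3` at the cost of a factor `1 / (n + 1)`, so the sum is at most `3 / (m + 1)` times
a sum of odd-index binomial coefficients of `m + 1`, which is at most `2 ^ m`; and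
`3 · 2 ^ m / (m + 1) ≤ 4 · 2 ^ m / (m - 2)`.
-/

open Finset

theorem Finset.sum_range_two_mul {M : Type*} [AddCommMonoid M] (f : ℕ → M) (N : ℕ) :
    ∑ k ∈ range (2 * N), f k = ∑ z ∈ range N, (f (2 * z) + f (2 * z + 1)) := by
  induction N with
  | zero => simp
  | succ N ih =>
    rw [show 2 * (N + 1) = 2 * N + 1 + 1 by ring, sum_range_succ, sum_range_succ, ih,
      sum_range_succ, add_assoc]

theorem Nat.sum_range_choose_le (n M : ℕ) : ∑ k ∈ range M, n.choose k ≤ 2 ^ n := by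
  rw [← Nat.sum_range_choose n]
  rcases le_total M (n + 1) with hM | hM
  · exact sum_le_sum_of_subset (range_subset_range.mpr hM)
  · have htail : ∑ k ∈ Ico (n + 1) M, n.choose k = 0 :=
      sum_eq_zero fun k hk => Nat.choose_eq_zero_of_lt (mem_Ico.mp hk).1
    rw [← sum_range_add_sum_Ico _ hM, htail, add_zero]

theorem Nat.sum_choose_succ_two_mul_add_one_le (n : ℕ) (s : Finset ℕ) :
    ∑ z ∈ s, (n + 1).choose (2 * z + 1) ≤ 2 ^ n := by
  obtain ⟨N, hsN⟩ := s.exists_nat_subset_range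
  calc ∑ z ∈ s, (n + 1).choose (2 * z + 1)
      ≤ ∑ z ∈ range N, (n + 1).choose (2 * z + 1) := sum_le_sum_of_subset hsN
    _ = ∑ k ∈ range (2 * N), n.choose k := by
      simp only [Nat.choose_succ_succ', sum_range_two_mul]
    _ ≤ 2 ^ n := Nat.sum_range_choose_le n _

theorem Nat.choose_two_mul_div_le (n : ℕ) {z : ℕ} (hz : 1 ≤ z) :
    (n.choose (2 * z) : ℝ) / z ≤ 3 / (n + 1) * (n + 1).choose (2 * z + 1) := by
  have hpascal : ((n : ℝ) + 1) * n.choose (2 * z) = (n + 1).choose (2 * z + 1) * (2 * z + 1) := by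
    exact_mod_cast Nat.add_one_mul_choose_eq n (2 * z)
  have hzR : (1 : ℝ) ≤ z := by exact_mod_cast hz
  have hC : (0 : ℝ) ≤ (n + 1).choose (2 * z + 1) := Nat.cast_nonneg _
  rw [div_mul_eq_mul_div, div_le_div_iff₀ (by linarith) (by positivity)]
  nlinarith

/-- For every `m ≥ 3`,
`Σ_{z=1}^{⌊m/2⌋} binom(m, 2z)/z ≤ 2^{m+2}/(m−2)`. -/
theorem stmt19 (m : ℕ) (hm : 3 ≤ m) :
    ∑ z ∈ Finset.Icc 1 (m / 2), (m.choose (2 * z) : ℝ) / (z : ℝ) ≤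
      2 ^ (m + 2) / ((m : ℝ) - 2) := by
  have hmR : (3 : ℝ) ≤ m := by exact_mod_cast hm
  have hodd : ∑ z ∈ Icc 1 (m / 2), ((m + 1).choose (2 * z + 1) : ℝ) ≤ 2 ^ m := by
    exact_mod_cast Nat.sum_choose_succ_two_mul_add_one_le m _
  calc ∑ z ∈ Icc 1 (m / 2), (m.choose (2 * z) : ℝ) / z
      ≤ ∑ z ∈ Icc 1 (m / 2), 3 / ((m : ℝ) + 1) * (m + 1).choose (2 * z + 1) :=
        sum_le_sum fun z hz => Nat.choose_two_mul_div_le m (mem_Icc.mp hz).1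
    _ = 3 / ((m : ℝ) + 1) * ∑ z ∈ Icc 1 (m / 2), ((m + 1).choose (2 * z + 1) : ℝ) :=
        (mul_sum _ _ _).symm
    _ ≤ 3 / ((m : ℝ) + 1) * 2 ^ m := by gcongr
    _ ≤ 2 ^ (m + 2) / ((m : ℝ) - 2) := by
      rw [div_mul_eq_mul_div, div_le_div_iff₀ (by linarith) (by linarith), pow_add]
      nlinarith [pow_pos (two_pos : (0 : ℝ) < 2) m]
end
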